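/- arXiv:1803.00861 — 12 statements merged into one kernel-verified Lean document; each statement's English description precedes it below -/
import Mathlib

section
/- For all positive integers k and r with r dividing k and k ≥ 2r, the 2-color zero-sum generalized Schur number S_{z,2}(k;r) equals rk - 2r + 1. -/
open Finset

private lemma sum_pat (m a b v w : ℕ) (hab : a + b ≤ m) (f : ℕ → ℕ) :
    ∑ i ∈ Finset.range m, f (if i < a then v else if i < a + b then w else 1)
      = a * f v + b * f w + (m - (a + b)) * f 1 := by
  rw [Finset.range_eq_Ico, ← Finset.sum_Ico_consecutive _ (Nat.zero_le (a+b)) hab,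
    ← Finset.sum_Ico_consecutive _ (Nat.zero_le a) (Nat.le_add_right a b)]
  have e1 : ∀ i ∈ Finset.Ico 0 a, f (if i < a then v else if i < a + b then w else 1) = f v := by
    intro i hi
    simp only [Finset.mem_Ico] at hi
    rw [if_pos hi.2]
  have e2 : ∀ i ∈ Finset.Ico a (a+b), f (if i < a then v else if i < a + b then w else 1) = f w := by
    intro i hi
    simp only [Finset.mem_Ico] at hi
    rw [if_neg (by omega), if_pos hi.2]
  have e3 : ∀ i ∈ Finset.Ico (a+b) m, f (if i < a then v else if i < a + b then w else 1) = f 1 := by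
    intro i hi
    simp only [Finset.mem_Ico] at hi
    rw [if_neg (by omega), if_neg (by omega)]
  rw [Finset.sum_congr rfl e1, Finset.sum_congr rfl e2, Finset.sum_congr rfl e3,
    Finset.sum_const, Finset.sum_const, Finset.sum_const, Nat.card_Ico, Nat.card_Ico, Nat.card_Ico]
  simp only [smul_eq_mul, Nat.sub_zero, Nat.add_sub_cancel_left]

private lemma build (k r t : ℕ) (χ : ℕ → ℕ) (a b v w : ℕ)
    (hab : a + b ≤ k - 1)
    (hv : v ∈ Finset.Icc 1 t) (hw : w ∈ Finset.Icc 1 t) (h1t : 1 ∈ Finset.Icc 1 t)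
    (hz : a * v + b * w + (k - 1 - (a + b)) ∈ Finset.Icc 1 t)
    (hcnt : (a * χ v + b * χ w + (k - 1 - (a + b)) * χ 1
        + χ (a * v + b * w + (k - 1 - (a + b)))) % r = 0) :
    ∃ (y : Fin (k - 1) → ℕ) (z : ℕ),
      (∀ i, y i ∈ Finset.Icc 1 t) ∧ z ∈ Finset.Icc 1 t ∧
      (∑ i, y i) = z ∧ ((∑ i, χ (y i)) + χ z) % r = 0 := by
  refine ⟨fun i => if (i : ℕ) < a then v else if (i : ℕ) < a + b then w else 1,
    a * v + b * w + (k - 1 - (a + b)), ?_, hz, ?_, ?_⟩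
  · intro i; dsimp only; split_ifs <;> assumption
  · rw [Fin.sum_univ_eq_sum_range (fun j => if j < a then v else if j < a + b then w else 1)]
    have := sum_pat (k-1) a b v w hab id
    simpa using this
  · rw [Fin.sum_univ_eq_sum_range (fun j => χ (if j < a then v else if j < a + b then w else 1))]
    rw [sum_pat (k-1) a b v w hab χ]
    exact hcnt

private lemma mod_helper (A r : ℕ) (h : A = 0 ∨ A = r) : A % r = 0 := by
  rcases h with h | h <;> simp [h]

private lemma core (k r t : ℕ) (χ : ℕ → ℕ) (hr : 2 ≤ r) (hdvd : r ∣ k) (hkr : 2 * r ≤ k)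
    (ht : t = r * k - 2 * r + 1) (hχ : ∀ n ∈ Finset.Icc 1 t, χ n ≤ 1)
    (h1 : χ 1 = 0) :
    ∃ (y : Fin (k - 1) → ℕ) (z : ℕ),
      (∀ i, y i ∈ Finset.Icc 1 t) ∧ z ∈ Finset.Icc 1 t ∧
      (∑ i, y i) = z ∧ ((∑ i, χ (y i)) + χ z) % r = 0 := by
  have hk4 : 4 ≤ k := by omega
  have htt : t = r * (k - 2) + 1 := by
    have h1' : r * (k - 2) + r * 2 = r * k := by rw [← Nat.mul_add]; congr 1; omega
    omega
  have hE : k - 1 + (r - 1) * (k - 2) = t := by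
    have h1' : (r - 1) * (k - 2) + 1 * (k - 2) = r * (k - 2) := by
      rw [← Nat.add_mul]; congr 1; omega
    omega
  have hkt : k - 1 ≤ t := by
    have : 0 ≤ (r - 1) * (k - 2) := Nat.zero_le _
    omega
  have h2t : 2 ≤ t ∧ 3 ≤ t := by
    have : 2 * 2 ≤ r * (k - 2) := Nat.mul_le_mul (by omega) (by omega)
    omega
  have h1t : 1 ∈ Finset.Icc 1 t := by simp; omega
  have hbit : ∀ n, 1 ≤ n → n ≤ t → χ n ≤ 1 := fun n a b => hχ n (Finset.mem_Icc.mpr ⟨a, b⟩)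
  -- case on χ (k-1)
  by_cases hbk : χ (k - 1) = 0
  · -- all ones
    refine build k r t χ 0 0 1 1 (by omega) h1t h1t h1t ?_ ?_
    · simp only [Nat.zero_mul, Nat.zero_add, Nat.add_zero, Nat.sub_zero, Finset.mem_Icc]
      omega
    · have e : 0 * 1 + 0 * 1 + (k - 1 - (0 + 0)) = k - 1 := by omega
      rw [e, hbk, h1]; simp
  have hbk1 : χ (k - 1) = 1 := by have := hbit (k - 1) (by omega) hkt; omega
  -- minimal one-colored value u
  have hex : ∃ n, 1 ≤ n ∧ χ n = 1 := ⟨k - 1, by omega, hbk1⟩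
  set u := Nat.find hex with hu_def
  have hu1 : χ u = 1 := (Nat.find_spec hex).2
  have hu_le : u ≤ k - 1 := Nat.find_min' hex ⟨by omega, hbk1⟩
  have hu_min : ∀ m, 1 ≤ m → m < u → χ m = 0 := by
    intro m h1m hmu
    have h2 := Nat.find_min hex hmu
    have h3 := hbit m h1m (by omega)
    simp only [not_and] at h2
    have := h2 h1m
    omega
  have hu2 : 2 ≤ u := by
    have h0 : 1 ≤ u := (Nat.find_spec hex).1
    rcases Nat.lt_or_ge u 2 with h | h
    · exfalso
      have h0 : 1 ≤ u := (Nat.find_spec hex).1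
      have he : u = 1 := by omega
      rw [he] at hu1
      omega
    · exact h
  by_cases hu3 : 3 ≤ u
  · -- case u ≥ 3
    have hmul : (r - 1) * (u - 1) ≤ (r - 1) * (k - 2) := Nat.mul_le_mul_left _ (by omega)
    have hst : k - 1 + (r - 1) * (u - 1) ≤ t := by omega
    by_cases hss : χ (k - 1 + (r - 1) * (u - 1)) = 1
    · refine build k r t χ (r - 1) 0 u 1 (by omega) (by simp; omega) h1t h1t ?_ ?_
      · have e : (r - 1) * u + 0 * 1 + (k - 1 - (r - 1 + 0)) = k - 1 + (r - 1) * (u - 1) := by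
          have : (r - 1) * (u - 1) + (r - 1) * 1 = (r - 1) * u := by
            rw [← Nat.mul_add]; congr 1; omega
          omega
        rw [e]; simp; omega
      · have e : (r - 1) * u + 0 * 1 + (k - 1 - (r - 1 + 0)) = k - 1 + (r - 1) * (u - 1) := by
          have : (r - 1) * (u - 1) + (r - 1) * 1 = (r - 1) * u := by
            rw [← Nat.mul_add]; congr 1; omega
          omega
        rw [e, hss, hu1, h1]
        exact mod_helper _ _ (by omega)
    · have hss0 : χ (k - 1 + (r - 1) * (u - 1)) = 0 := by
        have := hbit _ (by omega) hst; omega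
      have hcu1 : χ (u - 1) = 0 := hu_min _ (by omega) (by omega)
      have hcu2 : χ 2 = 0 := hu_min 2 (by omega) (by omega)
      have e : (r - 1) * (u - 1) + (r - 1) * 2 + (k - 1 - (r - 1 + (r - 1)))
          = k - 1 + (r - 1) * (u - 1) := by omega
      refine build k r t χ (r - 1) (r - 1) (u - 1) 2 (by omega) (by simp; omega)
        (by simp; omega) h1t ?_ ?_
      · rw [e]; simp; omega
      · rw [e, hss0, hcu1, hcu2, h1]
        exact mod_helper _ _ (by omega)
  · -- case u = 2
    have hu2eq : u = 2 := by omega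
    have hc2 : χ 2 = 1 := by rw [← hu2eq]; exact hu1
    have hmulk : (r - 1) * 1 ≤ (r - 1) * (k - 2) := Nat.mul_le_mul_left _ (by omega)
    have hmulk2 : (r - 1) * 2 ≤ (r - 1) * (k - 2) := Nat.mul_le_mul_left _ (by omega)
    have hs2t : k + r - 2 ≤ t := by omega
    by_cases hs2 : χ (k + r - 2) = 1
    · refine build k r t χ (r - 1) 0 2 1 (by omega) (by simp; omega) h1t h1t ?_ ?_
      · have e : (r - 1) * 2 + 0 * 1 + (k - 1 - (r - 1 + 0)) = k + r - 2 := by omega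
        rw [e]; simp; omega
      · have e : (r - 1) * 2 + 0 * 1 + (k - 1 - (r - 1 + 0)) = k + r - 2 := by omega
        rw [e, hs2, hc2, h1]
        exact mod_helper _ _ (by omega)
    · have hs20 : χ (k + r - 2) = 0 := by have := hbit _ (by omega) hs2t; omega
      by_cases h3 : χ 3 = 1
      · -- χ 3 = 1
        have hz3t : k + r - 1 ≤ t := by omega
        by_cases hz3 : χ (k + r - 1) = 1
        · refine build k r t χ (r - 2) 1 2 3 (by omega) (by simp; omega) (by simp; omega)
            h1t ?_ ?_
          · have e : (r - 2) * 2 + 1 * 3 + (k - 1 - (r - 2 + 1)) = k + r - 1 := by omega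
            rw [e]; simp; omega
          · have e : (r - 2) * 2 + 1 * 3 + (k - 1 - (r - 2 + 1)) = k + r - 1 := by omega
            rw [e, hz3, hc2, h3, h1]
            exact mod_helper _ _ (by omega)
        · have hz30 : χ (k + r - 1) = 0 := by have := hbit _ (by omega) hz3t; omega
          refine build k r t χ r 0 2 1 (by omega) (by simp; omega) h1t h1t ?_ ?_
          · have e : r * 2 + 0 * 1 + (k - 1 - (r + 0)) = k + r - 1 := by omega
            rw [e]; simp; omega
          · have e : r * 2 + 0 * 1 + (k - 1 - (r + 0)) = k + r - 1 := by omega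
            rw [e, hz30, hc2, h1]
            exact mod_helper _ _ (by omega)
      · have h30 : χ 3 = 0 := by have := hbit 3 (by omega) (by omega); omega
        by_cases hodd : r % 2 = 1
        · -- r odd: (r-1)/2 copies of 3
          refine build k r t χ ((r - 1) / 2) 0 3 1 (by omega) (by simp; omega) h1t h1t ?_ ?_
          · have e : (r - 1) / 2 * 3 + 0 * 1 + (k - 1 - ((r - 1) / 2 + 0)) = k + r - 2 := by
              omega
            rw [e]; simp; omega
          · have e : (r - 1) / 2 * 3 + 0 * 1 + (k - 1 - ((r - 1) / 2 + 0)) = k + r - 2 := by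
              omega
            rw [e, hs20, h30, h1]
            exact mod_helper _ _ (by omega)
        · -- r even, hence k even
          have hkeven : k % 2 = 0 := by
            obtain ⟨m, hm⟩ := hdvd
            obtain ⟨c, hc⟩ : ∃ c, r = 2 * c := ⟨r / 2, by omega⟩
            have : k = 2 * (c * m) := by rw [hm, hc]; ring
            omega
          by_cases hr2 : r = 2
          · subst hr2
            by_cases hT : χ t = 1
            · refine build k 2 t χ 1 0 (k - 1) 1 (by omega) (by simp; omega) h1t h1t ?_ ?_
              · have e : 1 * (k - 1) + 0 * 1 + (k - 1 - (1 + 0)) = t := by omega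
                rw [e]; simp; omega
              · have e : 1 * (k - 1) + 0 * 1 + (k - 1 - (1 + 0)) = t := by omega
                rw [e, hT, hbk1, h1]
                omega
            · have hT0 : χ t = 0 := by have := hbit t (by omega) (by omega); omega
              refine build k 2 t χ ((k - 2) / 2) 0 3 1 (by omega) (by simp; omega) h1t h1t ?_ ?_
              · have e : (k - 2) / 2 * 3 + 0 * 1 + (k - 1 - ((k - 2) / 2 + 0)) = t := by omega
                rw [e]; simp; omega
              · have e : (k - 2) / 2 * 3 + 0 * 1 + (k - 1 - ((k - 2) / 2 + 0)) = t := by omega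
                rw [e, hT0, h30, h1]
                omega
          · -- r ≥ 4 even
            have hr4 : 4 ≤ r := by omega
            have hexp : (r - 2) * (k - 2) + 1 * (k - 2) = (r - 1) * (k - 2) := by
              rw [← Nat.add_mul]; congr 1; omega
            have hmul3 : (r - 2) * 2 ≤ (r - 2) * (k - 2) := Nat.mul_le_mul_left _ (by omega)
            have hzt : 2 * k + r - 4 ≤ t := by omega
            by_cases hzs : χ (2 * k + r - 4) = 1
            · refine build k r t χ (r - 1) ((k - 2) / 2) 2 3 (by omega) (by simp; omega)
                (by simp; omega) h1t ?_ ?_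
              · have e : (r - 1) * 2 + (k - 2) / 2 * 3 + (k - 1 - (r - 1 + (k - 2) / 2))
                    = 2 * k + r - 4 := by omega
                rw [e]; simp; omega
              · have e : (r - 1) * 2 + (k - 2) / 2 * 3 + (k - 1 - (r - 1 + (k - 2) / 2))
                    = 2 * k + r - 4 := by omega
                rw [e, hzs, hc2, h30, h1]
                exact mod_helper _ _ (by omega)
            · have hzs0 : χ (2 * k + r - 4) = 0 := by have := hbit _ (by omega) hzt; omega
              refine build k r t χ 1 0 (k + r - 2) 1 (by omega) (by simp; omega) h1t h1t ?_ ?_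
              · have e : 1 * (k + r - 2) + 0 * 1 + (k - 1 - (1 + 0)) = 2 * k + r - 4 := by omega
                rw [e]; simp; omega
              · have e : 1 * (k + r - 2) + 0 * 1 + (k - 1 - (1 + 0)) = 2 * k + r - 4 := by omega
                rw [e, hzs0, hs20, h1]
                exact mod_helper _ _ (by omega)

theorem stmt0 (k r : ℕ) (hr : 0 < r) (hdvd : r ∣ k) (hkr : 2 * r ≤ k) :
    IsLeast {t : ℕ | 0 < t ∧ ∀ χ : ℕ → ℕ, (∀ n ∈ Finset.Icc 1 t, χ n ≤ 1) →
      ∃ (y : Fin (k - 1) → ℕ) (z : ℕ),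
      (∀ i, y i ∈ Finset.Icc 1 (t)) ∧ z ∈ Finset.Icc 1 (t) ∧
      (∑ i, y i) = z ∧ ((∑ i, χ (y i)) + χ z) % r = 0}
    (r * k - 2 * r + 1) := by
  have hk2 : 2 ≤ k := by omega
  constructor
  · -- membership
    refine ⟨by omega, ?_⟩
    intro χ hχ
    set t := r * k - 2 * r + 1 with ht
    have h1t : 1 ∈ Finset.Icc 1 t := by
      simp only [Finset.mem_Icc]
      omega
    by_cases hr1 : r = 1
    · -- r = 1 : any solution works
      subst hr1
      refine build k 1 t χ 0 0 1 1 (by omega) h1t h1t h1t ?_ (by simp [Nat.mod_one])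
      simp only [Nat.zero_mul, Nat.zero_add, Nat.add_zero, Nat.sub_zero, Finset.mem_Icc]
      omega
    have hr2 : 2 ≤ r := by omega
    by_cases h1 : χ 1 = 0
    · exact core k r t χ hr2 hdvd hkr rfl hχ h1
    · -- swap colors
      set χ' : ℕ → ℕ := fun n => 1 - χ n with hχ'
      have hχ'le : ∀ n ∈ Finset.Icc 1 t, χ' n ≤ 1 := by intro n _; simp [hχ']
      have h1' : χ' 1 = 0 := by
        have := hχ 1 h1t
        simp [hχ']
        omega
      obtain ⟨y, z, hy, hz, hsum, hcnt⟩ := core k r t χ' hr2 hdvd hkr rfl hχ'le h1'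
      refine ⟨y, z, hy, hz, hsum, ?_⟩
      have hyadd : ∀ i, χ (y i) + χ' (y i) = 1 := by
        intro i
        have h2 := hχ (y i) (hy i)
        have h3 : 1 ≤ y i := (Finset.mem_Icc.mp (hy i)).1
        simp [hχ']
        omega
      have hzadd : χ z + χ' z = 1 := by
        have h2 := hχ z hz
        simp [hχ']
        omega
      have hsumadd : (∑ i, χ (y i)) + (∑ i, χ' (y i)) = k - 1 := by
        rw [← Finset.sum_add_distrib]
        calc (∑ i : Fin (k-1), (χ (y i) + χ' (y i))) = ∑ i : Fin (k-1), 1 := by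
              exact Finset.sum_congr rfl (fun i _ => hyadd i)
          _ = k - 1 := by simp
      have hdvd2 : r ∣ ((∑ i, χ' (y i)) + χ' z) := Nat.dvd_of_mod_eq_zero hcnt
      have hdvd3 : r ∣ ((∑ i, χ (y i)) + χ z) := by
        have hkey : ((∑ i, χ (y i)) + χ z) = k - ((∑ i, χ' (y i)) + χ' z) := by omega
        rw [hkey]
        exact Nat.dvd_sub hdvd hdvd2
      obtain ⟨q, hq⟩ := hdvd3
      simp [hq, Nat.mul_mod_right]
  · -- lower bound
    intro t' ⟨ht'pos, hprop⟩
    by_contra hcon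
    push_neg at hcon
    have ht' : t' ≤ r * k - 2 * r := by omega
    set χ : ℕ → ℕ := fun n => if n ≤ k - 2 then 1 else 0 with hχdef
    obtain ⟨y, z, hy, hz, hsum, hcnt⟩ := hprop χ (by intro n _; simp only [hχdef]; split <;> omega)
    have hy1 : ∀ i, 1 ≤ y i := fun i => (Finset.mem_Icc.mp (hy i)).1
    have hzt : z ≤ t' := (Finset.mem_Icc.mp hz).2
    set j : ℕ := ∑ i, χ (y i) with hj
    have hzsum : k - 1 ≤ z := by
      rw [← hsum]
      calc (k - 1 : ℕ) = ∑ _i : Fin (k - 1), 1 := by simp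
        _ ≤ ∑ i, y i := Finset.sum_le_sum (fun i _ => hy1 i)
    have hχz : χ z = 0 := by
      simp only [hχdef]
      rw [if_neg (by omega)]
    have hrj : r ∣ j := by
      rw [hχz] at hcnt
      exact Nat.dvd_of_mod_eq_zero (by simpa using hcnt)
    -- pointwise bound and its sum
    have hpt : ∀ i : Fin (k - 1), k - 1 ≤ y i + (k - 2) * χ (y i) := by
      intro i
      have := hy1 i
      simp only [hχdef]
      split <;> omega
    have hkey : (k - 1) * (k - 1) ≤ z + (k - 2) * j := by
      have h1 : (k - 1) * (k - 1) = ∑ _i : Fin (k - 1), (k - 1) := by simp [mul_comm]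
      have h2 : (∑ i : Fin (k - 1), (y i + (k - 2) * χ (y i)))
          = z + (k - 2) * j := by
        rw [Finset.sum_add_distrib, ← Finset.mul_sum, hsum]
      rw [h1, ← h2]
      exact Finset.sum_le_sum (fun i _ => hpt i)
    -- j ≤ k - r
    have hjk : j ≤ k - 1 := by
      rw [hj]
      calc (∑ i, χ (y i)) ≤ ∑ _i : Fin (k - 1), 1 :=
            Finset.sum_le_sum (fun i _ => by
              have h3 := hy1 i
              have h4 : y i ≤ t' := (Finset.mem_Icc.mp (hy i)).2
              simp only [hχdef]
              split <;> omega)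
        _ = k - 1 := by simp
    have hjr : j + r ≤ k := by
      have hd : r ∣ k - j := Nat.dvd_sub hdvd hrj
      have := Nat.le_of_dvd (by omega) hd
      omega
    -- final contradiction
    have h9 : (k - 2) * j + (k - 2) * r ≤ (k - 2) * k := by
      rw [← Nat.mul_add]
      exact Nat.mul_le_mul_left _ (by omega)
    have h10 : (k - 2) * k + 1 = (k - 1) * (k - 1) := by
      zify [show (1:ℕ) ≤ k by omega, show (2:ℕ) ≤ k by omega]
      ring
    have h11 : (k - 2) * r + 2 * r = k * r := by
      rw [← Nat.add_mul]; congr 1; omega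
    have h12 : k * r = r * k := Nat.mul_comm k r
    omega
end

section
/- Let k and r be positive integers with r | k and k ≥ 2r. Then the 2-coloring χ of [1, rk-2r] given by χ(i) = 0 for 1 ≤ i ≤ k-2 and χ(i) = 1 for k-1 ≤ i ≤ rk-2r admits no solution (x₁,...,x_k) to x₁ + ⋯ + x_{k-1} = x_k with ∑_{i=1}^k χ(x_i) ≡ 0 (mod r). -/
theorem stmt1 (k r : ℕ) (hr : 0 < r) (hdvd : r ∣ k) (hkr : 2 * r ≤ k)
    (χ : ℕ → ℕ) (hχ : ∀ n, χ n = if n ≤ k - 2 then 0 else 1) :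
    ¬ (∃ (y : Fin (k - 1) → ℕ) (z : ℕ),
      (∀ i, y i ∈ Finset.Icc 1 (r * k - 2 * r)) ∧ z ∈ Finset.Icc 1 (r * k - 2 * r) ∧
      (∑ i, y i) = z ∧ ((∑ i, χ (y i)) + χ z) % r = 0) := by
  rintro ⟨y, z, hy, hz, hsum, hmod⟩
  have hk2 : 2 ≤ k := by omega
  simp only [Finset.mem_Icc] at hy hz
  have hχ01 : ∀ n, χ n ≤ 1 := by intro n; rw [hχ]; split <;> omega
  have hbound : ∀ i, χ (y i) * (k - 2) + 1 ≤ y i := by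
    intro i
    rw [hχ]
    split
    · simpa using (hy i).1
    · omega
  have hS : (∑ i, χ (y i)) * (k - 2) + (k - 1) ≤ z := by
    calc (∑ i, χ (y i)) * (k - 2) + (k - 1)
        = ∑ i : Fin (k - 1), (χ (y i) * (k - 2) + 1) := by
          rw [Finset.sum_add_distrib, ← Finset.sum_mul, Finset.sum_const]
          simp
      _ ≤ ∑ i, y i := Finset.sum_le_sum fun i _ => hbound i
      _ = z := hsum
  set S := ∑ i, χ (y i) with hSdef
  rcases Nat.eq_zero_or_pos (S + χ z) with h0 | hpos
  · have hz0 : χ z = 0 := by omega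
    have hz2 : z ≤ k - 2 := by
      by_contra h
      rw [hχ] at hz0
      simp [h] at hz0
    omega
  · have hge : r ≤ S + χ z :=
      Nat.le_of_dvd hpos (Nat.dvd_of_mod_eq_zero hmod)
    have hSr : r - 1 ≤ S := by have := hχ01 z; omega
    have hkey : (r - 1) * (k - 2) + (k - 1) ≤ z :=
      le_trans (by gcongr) hS
    obtain ⟨r', rfl⟩ : ∃ r', r = r' + 1 := ⟨r - 1, by omega⟩
    obtain ⟨k'', rfl⟩ : ∃ k'', k = k'' + 2 := ⟨k - 2, by omega⟩
    have h1 : (r' + 1) * (k'' + 2) = r' * k'' + 2 * r' + k'' + 2 := by ring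
    have h2 : (r' + 1 - 1) * (k'' + 2 - 2) = r' * k'' := by simp
    have hzb := hz.2
    rw [h1] at hzb
    rw [h2] at hkey
    generalize r' * k'' = p at hzb hkey
    omega
end

section
/- Let k and r be positive integers with r | k and k ≥ 2r, and let χ: [1, rk-2r+1] → {0,1} be a 2-coloring with χ(1) = 0 and χ(r-1) = 0. Then there exist x₁,...,x_k in [1, rk-2r+1] with x₁ + ⋯ + x_{k-1} = x_k and ∑_{i=1}^k χ(x_i) ≡ 0 (mod r). -/
/-!
Suppose no solution is `r`-zero-sum. Taking `r - 1` copies of `a + 1`, `r` copies of `c + 1` and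
`k - 2r` ones as summands shows `χ z ≠ χ (a + 1)` for `z = (r - 1) a + r c + k - 1`, since otherwise
the colour sum would be `r (χ (a + 1) + χ (c + 1))`. Comparing the representations `(a, c) = (w, r - 1)`
and `(w + r, 0)` of the same `z` makes `χ` periodic with period `r` on `[1, k - 1]`, so
`χ (k - 1) = χ (r - 1) = 0 = χ 1`, contradicting the case `a = c = 0`.
-/

open Finset

def NoZeroSumSolution (χ : ℕ → ℕ) (r N n : ℕ) : Prop :=
  ¬ ∃ (y : Fin n → ℕ) (z : ℕ), (∀ i, y i ∈ Icc 1 N) ∧ z ∈ Icc 1 N ∧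
    (∑ i, y i) = z ∧ ((∑ i, χ (y i)) + χ z) % r = 0

lemma sum_range_ite_three_blocks {α M : Type*} [AddCommMonoid M] (f : α → M) (p q w : α)
    {A B n : ℕ} (hA : A ≤ B) (hB : B ≤ n) :
    ∑ j ∈ range n, f (if j < A then p else if j < B then q else w)
      = A • f p + (B - A) • f q + (n - B) • f w := by
  rw [range_eq_Ico, ← sum_Ico_consecutive _ (Nat.zero_le B) hB,
    ← sum_Ico_consecutive _ (Nat.zero_le A) hA]
  have hp : ∀ j ∈ Ico 0 A, f (if j < A then p else if j < B then q else w) = f p := by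
    intro j hj
    rw [if_pos (mem_Ico.mp hj).2]
  have hq : ∀ j ∈ Ico A B, f (if j < A then p else if j < B then q else w) = f q := by
    intro j hj
    rw [mem_Ico] at hj
    rw [if_neg (by omega), if_pos hj.2]
  have hw : ∀ j ∈ Ico B n, f (if j < A then p else if j < B then q else w) = f w := by
    intro j hj
    rw [mem_Ico] at hj
    rw [if_neg (by omega), if_neg (by omega)]
  simp only [sum_congr rfl hp, sum_congr rfl hq, sum_congr rfl hw, sum_const, Nat.card_Ico,
    Nat.sub_zero]

lemma sub_one_mul_sub_two_add_sub_one {r k : ℕ} (hr : 1 ≤ r) (hk : 2 ≤ k) :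
    (r - 1) * (k - 2) + (k - 1) = r * k - 2 * r + 1 := by
  obtain ⟨r, rfl⟩ := Nat.exists_eq_add_of_le' hr
  obtain ⟨k, rfl⟩ := Nat.exists_eq_add_of_le' hk
  simp only [Nat.add_sub_cancel]
  have : (r + 1) * (k + 2) = r * k + k + 2 * (r + 1) := by ring
  omega

lemma NoZeroSumSolution.apply_ne {χ : ℕ → ℕ} {r k N : ℕ} (hfree : NoZeroSumSolution χ r N (k - 1))
    (hr : 2 ≤ r) (hkr : 2 * r ≤ k) (h1 : χ 1 = 0) {a c z : ℕ}
    (hz : z = (r - 1) * a + r * c + (k - 1)) (hzN : z ≤ N) :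
    χ z ≠ χ (a + 1) := by
  intro heq
  set block : ℕ → ℕ := fun j => if j < r - 1 then a + 1 else if j < 2 * r - 1 then c + 1 else 1
  have hsum : ∀ f : ℕ → ℕ, ∑ i : Fin (k - 1), f (block i)
      = (r - 1) * f (a + 1) + r * f (c + 1) + (k - 2 * r) * f 1 := by
    intro f
    rw [Fin.sum_univ_eq_sum_range (fun j => f (block j)),
      sum_range_ite_three_blocks (A := r - 1) (B := 2 * r - 1) f _ _ _ (by omega) (by omega),
      show 2 * r - 1 - (r - 1) = r by omega, show k - 1 - (2 * r - 1) = k - 2 * r by omega]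
    rfl
  have haz : a ≤ (r - 1) * a := Nat.le_mul_of_pos_left a (by omega)
  have hcz : c ≤ r * c := Nat.le_mul_of_pos_left c (by omega)
  refine hfree ⟨fun i => block i, z, fun i => ?_, ?_, ?_, ?_⟩
  · simp only [block, mem_Icc]
    split_ifs <;> omega
  · rw [mem_Icc]
    omega
  · refine (hsum id).trans ?_
    simp only [hz, id, mul_add, mul_one]
    omega
  · rw [hsum χ, heq, h1, mul_zero, add_zero, add_right_comm, ← add_one_mul,
      Nat.sub_add_cancel (by omega), ← mul_add, Nat.mul_mod_right]

lemma NoZeroSumSolution.apply_add_eq {χ : ℕ → ℕ} {r k : ℕ}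
    (hfree : NoZeroSumSolution χ r (r * k - 2 * r + 1) (k - 1)) (hr : 2 ≤ r) (hkr : 2 * r ≤ k)
    (hχ : ∀ n ∈ Icc 1 (r * k - 2 * r + 1), χ n ≤ 1) (h1 : χ 1 = 0)
    {v : ℕ} (hv : 1 ≤ v) (hvr : v + r ≤ k - 1) :
    χ (v + r) = χ v := by
  obtain ⟨w, rfl⟩ := Nat.exists_eq_add_of_le' hv
  obtain ⟨z, hz⟩ : ∃ z, z = (r - 1) * (w + r) + (k - 1) := ⟨_, rfl⟩
  have hzN : z ≤ r * k - 2 * r + 1 := by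
    rw [← sub_one_mul_sub_two_add_sub_one (by omega) (by omega)]
    have : w + r ≤ k - 2 := by omega
    rw [hz]
    gcongr
  have hne₁ : χ z ≠ χ (w + 1) := hfree.apply_ne (c := r - 1) hr hkr h1 (by rw [hz]; ring) hzN
  have hne₂ : χ z ≠ χ (w + r + 1) := hfree.apply_ne (c := 0) hr hkr h1 (by rw [hz]; ring) hzN
  have hbit : ∀ n, 1 ≤ n → n ≤ z → χ n ≤ 1 := fun n hn hnz ↦
    hχ n (mem_Icc.mpr ⟨hn, hnz.trans hzN⟩)
  have hvz : w + 1 + r ≤ z := by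
    have := Nat.le_mul_of_pos_left (w + r) (show 0 < r - 1 by omega)
    omega
  have hχv := hbit (w + 1) (by omega) (by omega)
  have hχvr := hbit (w + 1 + r) (by omega) hvz
  have hχz := hbit z (by omega) le_rfl
  rw [add_right_comm] at hne₂
  omega

lemma apply_add_mul_eq_of_apply_add_eq {α : Type*} {f : ℕ → α} {r M : ℕ}
    (hf : ∀ v, 1 ≤ v → v + r ≤ M → f (v + r) = f v) {v : ℕ} (hv : 1 ≤ v) :
    ∀ s, v + r * s ≤ M → f (v + r * s) = f v
  | 0, _ => rfl
  | s + 1, hs => by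
    rw [mul_add_one, ← add_assoc] at hs ⊢
    rw [hf _ (by omega) hs, apply_add_mul_eq_of_apply_add_eq hf hv s (by omega)]

theorem stmt2 (k r : ℕ) (hr : 0 < r) (hdvd : r ∣ k) (hkr : 2 * r ≤ k)
    (χ : ℕ → ℕ) (hχ : ∀ n ∈ Finset.Icc 1 (r * k - 2 * r + 1), χ n ≤ 1)
    (h1 : χ 1 = 0) (h2 : χ (r - 1) = 0) :
    ∃ (y : Fin (k - 1) → ℕ) (z : ℕ),
      (∀ i, y i ∈ Finset.Icc 1 (r * k - 2 * r + 1)) ∧ z ∈ Finset.Icc 1 (r * k - 2 * r + 1) ∧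
      (∑ i, y i) = z ∧ ((∑ i, χ (y i)) + χ z) % r = 0 := by
  have hkN : k - 1 ≤ r * k - 2 * r + 1 := by
    rw [← sub_one_mul_sub_two_add_sub_one hr (by omega)]
    omega
  rcases Nat.lt_or_ge r 2 with hr1 | hr2
  · obtain rfl : r = 1 := by omega
    exact ⟨fun _ => 1, k - 1, fun _ => mem_Icc.mpr ⟨le_rfl, (show 1 ≤ k - 1 by omega).trans hkN⟩,
      mem_Icc.mpr ⟨by omega, hkN⟩, by simp, Nat.mod_one _⟩
  by_contra hfree
  change NoZeroSumSolution χ r (r * k - 2 * r + 1) (k - 1) at hfree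
  obtain ⟨m, hkm⟩ := hdvd
  have hm : r - 1 + r * (m - 1) = k - 1 := by
    have : r ≤ r * m := hkm ▸ (by omega)
    rw [Nat.mul_sub_one]
    omega
  have hper : χ (k - 1) = χ (r - 1) := by
    rw [← hm]
    exact apply_add_mul_eq_of_apply_add_eq (fun v hv hvr ↦ hfree.apply_add_eq hr2 hkr hχ h1 hv hvr)
      (by omega) _ hm.le
  exact hfree.apply_ne (a := 0) (c := 0) hr2 hkr h1 (by simp) hkN (by rw [hper, h2, h1])
end

section
/- Let k and r be positive integers with r | k and k ≥ 2r, and let χ: [1, rk-2r+1] → {0,1} satisfy χ(1) = 0, χ(r-1) = 1, and χ(r) = 0. Then there exist x₁,...,x_k in [1, rk-2r+1] with x₁ + ⋯ + x_{k-1} = x_k and ∑_{i=1}^k χ(x_i) ≡ 0 (mod r). -/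
lemma sum_ite_const_fin (n m c d : ℕ) (hm : m ≤ n) :
    (∑ i : Fin n, if (i : ℕ) < m then c else d) = m * c + (n - m) * d := by
  rw [Fin.sum_univ_eq_sum_range (fun i => if i < m then c else d)]
  rw [← Finset.sum_range_add_sum_Ico _ hm]
  have e1 : ∑ i ∈ Finset.range m, (if i < m then c else d) = m * c := by
    rw [Finset.sum_congr rfl (fun i hi => if_pos (Finset.mem_range.mp hi))]
    simp [mul_comm]
  have e2 : ∑ i ∈ Finset.Ico m n, (if i < m then c else d) = (n - m) * d := by
    rw [Finset.sum_congr rfl (fun i hi => if_neg (by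
      simpa using not_lt.mpr (Finset.mem_Ico.mp hi).1))]
    simp [Nat.card_Ico, mul_comm]
  rw [e1, e2]

theorem stmt3 (k r : ℕ) (hr : 0 < r) (hdvd : r ∣ k) (hkr : 2 * r ≤ k)
    (χ : ℕ → ℕ) (hχ : ∀ n ∈ Finset.Icc 1 (r * k - 2 * r + 1), χ n ≤ 1)
    (h1 : χ 1 = 0) (h2 : χ (r - 1) = 1) (h3 : χ r = 0) :
    ∃ (y : Fin (k - 1) → ℕ) (z : ℕ),
      (∀ i, y i ∈ Finset.Icc 1 (r * k - 2 * r + 1)) ∧ z ∈ Finset.Icc 1 (r * k - 2 * r + 1) ∧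
      (∑ i, y i) = z ∧ ((∑ i, χ (y i)) + χ z) % r = 0 := by
  set N := r * k - 2 * r + 1 with hN
  by_cases hq : r = 1
  · -- r = 1
    subst hq
    refine ⟨fun _ => 1, k - 1, ?_, ?_, ?_, ?_⟩
    · intro i; simp only [Finset.mem_Icc, hN]; omega
    · rw [Finset.mem_Icc, hN]; omega
    · simp
    · simp [Nat.mod_one]
  · -- r ≥ 2
    have hr2' : 2 ≤ r := by omega
    set Z := k - r + (r - 1) * (r - 1) with hZ
    have hZmem : Z ∈ Finset.Icc 1 N := by
      rw [Finset.mem_Icc]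
      have hrk : r ≤ k := by omega
      have h2rk : 2 * r ≤ r * k := by nlinarith
      constructor
      · omega
      · rw [hZ, hN]
        zify [hrk, h2rk, show 1 ≤ r by omega]
        nlinarith [mul_nonneg (by omega : (0:ℤ) ≤ (r:ℤ) - 1) (by exact_mod_cast sub_nonneg.mpr (Int.ofNat_le.mpr hrk) : (0:ℤ) ≤ (k:ℤ) - (r:ℤ))]
    have hrange : ∀ v, 1 ≤ v → v ≤ r → v ∈ Finset.Icc 1 N := by
      intro v hv1 hv2
      rw [Finset.mem_Icc]
      refine ⟨hv1, hv2.trans ?_⟩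
      have hk4 : 4 ≤ k := by omega
      have : r * 4 ≤ r * k := Nat.mul_le_mul_left r hk4
      omega
    have hm2 : r - 2 ≤ k - 1 := by omega
    have hm1 : r - 1 ≤ k - 1 := by omega
    by_cases hc : χ Z = 0
    · -- Config A : (r-2) copies of r, rest ones
      refine ⟨fun i => if (i : ℕ) < r - 2 then r else 1, Z, ?_, hZmem, ?_, ?_⟩
      · intro i
        by_cases h : (i : ℕ) < r - 2 <;> simp only [h, if_pos, if_neg, if_true, if_false] <;>
          [exact hrange r hr le_rfl; exact hrange 1 le_rfl hr]
      · rw [sum_ite_const_fin _ _ _ _ hm2, hZ]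
        zify [hm2, hr2', show 1 ≤ k by omega, show r ≤ k by omega, show 1 ≤ r by omega]
        ring
      · have : (∑ i : Fin (k-1), χ (if (i : ℕ) < r - 2 then r else 1))
            = (r-2) * χ r + (k - 1 - (r-2)) * χ 1 := by
          rw [show (fun i : Fin (k-1) => χ (if (i : ℕ) < r - 2 then r else 1))
              = fun i : Fin (k-1) => if (i : ℕ) < r - 2 then χ r else χ 1 from
            funext fun i => apply_ite χ _ _ _]
          exact sum_ite_const_fin _ _ _ _ hm2
        rw [this, h1, h3, hc]
        simp
    · -- Config B : (r-1) copies of (r-1), rest ones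
      have hc1 : χ Z = 1 := by have := hχ Z hZmem; omega
      refine ⟨fun i => if (i : ℕ) < r - 1 then r - 1 else 1, Z, ?_, hZmem, ?_, ?_⟩
      · intro i
        by_cases h : (i : ℕ) < r - 1 <;> simp only [h, if_pos, if_neg, if_true, if_false] <;>
          [exact hrange (r-1) (by omega) (by omega); exact hrange 1 le_rfl hr]
      · rw [sum_ite_const_fin _ _ _ _ hm1, hZ]
        zify [hm1, show 1 ≤ r by omega, show 1 ≤ k by omega, show r ≤ k by omega]
        ring
      · have : (∑ i : Fin (k-1), χ (if (i : ℕ) < r - 1 then r - 1 else 1))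
            = (r-1) * χ (r-1) + (k - 1 - (r-1)) * χ 1 := by
          rw [show (fun i : Fin (k-1) => χ (if (i : ℕ) < r - 1 then r - 1 else 1))
              = fun i : Fin (k-1) => if (i : ℕ) < r - 1 then χ (r-1) else χ 1 from
            funext fun i => apply_ite χ _ _ _]
          exact sum_ite_const_fin _ _ _ _ hm1
        rw [this, h1, h2, hc1]
        simp only [mul_one, mul_zero, add_zero]
        rw [show r - 1 + 1 = r by omega]
        exact Nat.mod_self r
end

section
/- Let k and r be positive integers with r | k and k ≥ 2r, and let χ: [1, rk-2r+1] → {0,1} satisfy χ(1) = 0, χ(r-1) = 1, and χ(k-2) = 1. Then there exist x₁,...,x_k in [1, rk-2r+1] with x₁ + ⋯ + x_{k-1} = x_k and ∑_{i=1}^k χ(x_i) ≡ 0 (mod r). -/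
/-!
Put `z = r(k-2)`, which is at most `rk - 2r + 1`. If `χ(z) = 0`, then `r-1` copies of `k-2`, one
copy of `r-1` and `k-r-1` copies of `1` sum to `z` and carry total colour `r`. If `χ(z) = 1`, then
one copy of `k-2` and `k-2` copies of `r-1` sum to `z` and carry total colour `k ≡ 0 (mod r)`.
For `r = 1` every solution is zero-sum.
-/

def threeBlock {α : Type*} (n a b : ℕ) (u v w : α) : Fin n → α :=
  fun i => if (i : ℕ) < a then u else if (i : ℕ) < a + b then v else w

section ThreeBlock

variable {α : Type*} {n a b : ℕ} {u v w : α}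

theorem threeBlock_mem {s : Finset α} (hu : u ∈ s) (hv : v ∈ s) (hw : w ∈ s) (i : Fin n) :
    threeBlock n a b u v w i ∈ s := by
  unfold threeBlock
  split_ifs <;> assumption

theorem sum_comp_threeBlock {M : Type*} [AddCommMonoid M] (f : α → M) (hab : a + b ≤ n) :
    ∑ i, f (threeBlock n a b u v w i) = a • f u + b • f v + (n - a - b) • f w := by
  unfold threeBlock
  rw [Fin.sum_univ_eq_sum_range (fun j => f (if j < a then u else if j < a + b then v else w)),
    Finset.range_eq_Ico, ← Finset.sum_Ico_consecutive _ (Nat.zero_le a) (by omega),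
    ← Finset.sum_Ico_consecutive _ (Nat.le_add_right a b) hab]
  have first : ∀ j ∈ Finset.Ico 0 a,
      f (if j < a then u else if j < a + b then v else w) = f u := fun j hj => by
    rw [if_pos (Finset.mem_Ico.mp hj).2]
  have second : ∀ j ∈ Finset.Ico a (a + b),
      f (if j < a then u else if j < a + b then v else w) = f v := fun j hj => by
    rw [Finset.mem_Ico] at hj
    rw [if_neg (by omega), if_pos hj.2]
  have third : ∀ j ∈ Finset.Ico (a + b) n,
      f (if j < a then u else if j < a + b then v else w) = f w := fun j hj => by
    rw [Finset.mem_Ico] at hj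
    rw [if_neg (by omega), if_neg (by omega)]
  rw [Finset.sum_congr rfl first, Finset.sum_congr rfl second, Finset.sum_congr rfl third]
  simp only [Finset.sum_const, Nat.card_Ico]
  rw [Nat.sub_zero, Nat.add_sub_cancel_left, Nat.sub_sub, add_assoc]

end ThreeBlock

def HasZeroSumSolution (χ : ℕ → ℕ) (r n N : ℕ) : Prop :=
  ∃ (y : Fin n → ℕ) (z : ℕ), (∀ i, y i ∈ Finset.Icc 1 N) ∧ z ∈ Finset.Icc 1 N ∧
    (∑ i, y i) = z ∧ ((∑ i, χ (y i)) + χ z) % r = 0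

theorem HasZeroSumSolution.of_threeBlock (χ : ℕ → ℕ) {r n N a b u v w z : ℕ} (hab : a + b ≤ n)
    (hu : u ∈ Finset.Icc 1 N) (hv : v ∈ Finset.Icc 1 N) (hw : w ∈ Finset.Icc 1 N)
    (hz : z ∈ Finset.Icc 1 N) (hsum : a * u + b * v + (n - a - b) * w = z)
    (hcolour : (a * χ u + b * χ v + (n - a - b) * χ w + χ z) % r = 0) :
    HasZeroSumSolution χ r n N := by
  refine ⟨threeBlock n a b u v w, z, threeBlock_mem hu hv hw, hz, ?_, ?_⟩
  · simpa only [smul_eq_mul, id] using (sum_comp_threeBlock id hab).trans hsum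
  · simpa only [sum_comp_threeBlock χ hab, smul_eq_mul] using hcolour

theorem hasZeroSumSolution_one (χ : ℕ → ℕ) {n N : ℕ} (hn : 1 ≤ n) (hnN : n ≤ N) :
    HasZeroSumSolution χ 1 n N :=
  ⟨fun _ => 1, n, fun _ => Finset.mem_Icc.mpr ⟨le_rfl, hn.trans hnN⟩, Finset.mem_Icc.mpr ⟨hn, hnN⟩,
    by simp, Nat.mod_one _⟩

theorem mem_Icc_of_one_le_of_le {s t x : ℕ} (hx : 1 ≤ x) (hxt : x ≤ t) :
    x ∈ Finset.Icc 1 ((s + 1) * t + 1) :=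
  Finset.mem_Icc.mpr ⟨hx, by nlinarith⟩

section TwoColourings

variable (χ : ℕ → ℕ) {s t : ℕ}

theorem hasZeroSumSolution_of_colour_eq_zero (hs : 1 ≤ s) (hst : s ≤ t) (h1 : χ 1 = 0)
    (h2 : χ s = 1) (h3 : χ t = 1) (hz : χ ((s + 1) * t) = 0) :
    HasZeroSumSolution χ (s + 1) (t + 1) ((s + 1) * t + 1) := by
  refine HasZeroSumSolution.of_threeBlock χ (a := s) (b := 1) (z := (s + 1) * t) (by omega)
    (mem_Icc_of_one_le_of_le (by omega) le_rfl) (mem_Icc_of_one_le_of_le hs hst)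
    (mem_Icc_of_one_le_of_le le_rfl (by omega)) (Finset.mem_Icc.mpr ⟨by nlinarith, by omega⟩) ?_ ?_
  · obtain ⟨d, rfl⟩ := Nat.exists_eq_add_of_le hst
    rw [show s + d + 1 - s - 1 = d by omega]
    ring
  · rw [h3, h2, h1, hz]
    simp

theorem hasZeroSumSolution_of_colour_eq_one (hs : 1 ≤ s) (hst : s ≤ t) (hdvd : s + 1 ∣ t + 2)
    (h2 : χ s = 1) (h3 : χ t = 1) (hz : χ ((s + 1) * t) = 1) :
    HasZeroSumSolution χ (s + 1) (t + 1) ((s + 1) * t + 1) := by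
  have hempty : t + 1 - 1 - t = 0 := by omega
  refine HasZeroSumSolution.of_threeBlock χ (a := 1) (b := t) (w := 1) (z := (s + 1) * t) (by omega)
    (mem_Icc_of_one_le_of_le (hs.trans hst) le_rfl) (mem_Icc_of_one_le_of_le hs hst)
    (mem_Icc_of_one_le_of_le le_rfl (by omega)) (Finset.mem_Icc.mpr ⟨by nlinarith, by omega⟩) ?_ ?_
  · rw [hempty]
    ring
  · rw [h3, h2, hz, hempty, zero_mul]
    exact Nat.mod_eq_zero_of_dvd (by convert hdvd using 1; ring)

end TwoColourings

theorem stmt4 (k r : ℕ) (hr : 0 < r) (hdvd : r ∣ k) (hkr : 2 * r ≤ k)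
    (χ : ℕ → ℕ) (hχ : ∀ n ∈ Finset.Icc 1 (r * k - 2 * r + 1), χ n ≤ 1)
    (h1 : χ 1 = 0) (h2 : χ (r - 1) = 1) (h3 : χ (k - 2) = 1) :
    ∃ (y : Fin (k - 1) → ℕ) (z : ℕ),
      (∀ i, y i ∈ Finset.Icc 1 (r * k - 2 * r + 1)) ∧ z ∈ Finset.Icc 1 (r * k - 2 * r + 1) ∧
      (∑ i, y i) = z ∧ ((∑ i, χ (y i)) + χ z) % r = 0 := by
  obtain ⟨s, rfl⟩ : ∃ s, r = s + 1 := ⟨r - 1, by omega⟩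
  obtain ⟨t, rfl⟩ : ∃ t, k = t + 2 := ⟨k - 2, by omega⟩
  have hN : (s + 1) * (t + 2) - 2 * (s + 1) + 1 = (s + 1) * t + 1 := by
    rw [Nat.sub_eq_of_eq_add]
    ring
  simp only [hN, Nat.add_sub_cancel] at hχ h2 h3 ⊢
  change HasZeroSumSolution χ (s + 1) (t + 1) ((s + 1) * t + 1)
  rcases Nat.eq_zero_or_pos s with rfl | hs
  · exact hasZeroSumSolution_one χ (by omega) (by omega)
  have hz : (s + 1) * t ∈ Finset.Icc 1 ((s + 1) * t + 1) :=
    Finset.mem_Icc.mpr ⟨by nlinarith, by omega⟩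
  rcases Nat.le_one_iff_eq_zero_or_eq_one.mp (hχ _ hz) with hχz | hχz
  · exact hasZeroSumSolution_of_colour_eq_zero χ hs (by omega) h1 h2 h3 hχz
  · exact hasZeroSumSolution_of_colour_eq_one χ hs (by omega) hdvd h2 h3 hχz
end

section
/- Let k and r be positive integers with r | k and k ≥ 2r, and let χ: [1, rk-2r+1] → {0,1} satisfy χ(1) = 0, χ(r-1) = 1, and χ(k) = 0. Then there exist x₁,...,x_k in [1, rk-2r+1] with x₁ + ⋯ + x_{k-1} = x_k and ∑_{i=1}^k χ(x_i) ≡ 0 (mod r). -/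
lemma fin_sum_ite_aux (n A B : ℕ) (hn : 0 < n) :
    (∑ i : Fin n, if (i : ℕ) = 0 then A else B) = A + (n - 1) * B := by
  rw [← Finset.add_sum_erase Finset.univ _ (Finset.mem_univ (⟨0, hn⟩ : Fin n))]
  have h : ∀ i ∈ Finset.univ.erase (⟨0, hn⟩ : Fin n), (if (i : ℕ) = 0 then A else B) = B := by
    intro i hi
    rw [if_neg]
    intro h
    exact (Finset.mem_erase.mp hi).1 (Fin.ext h)
  rw [Finset.sum_congr rfl h, Finset.sum_const, smul_eq_mul,
    Finset.card_erase_of_mem (Finset.mem_univ _), Finset.card_univ, Fintype.card_fin]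
  simp

theorem stmt6 (k r : ℕ) (hr : 0 < r) (hdvd : r ∣ k) (hkr : 2 * r ≤ k)
    (χ : ℕ → ℕ) (hχ : ∀ n ∈ Finset.Icc 1 (r * k - 2 * r + 1), χ n ≤ 1)
    (h1 : χ 1 = 0) (h2 : χ (r - 1) = 1) (h3 : χ k = 0) :
    ∃ (y : Fin (k - 1) → ℕ) (z : ℕ),
      (∀ i, y i ∈ Finset.Icc 1 (r * k - 2 * r + 1)) ∧ z ∈ Finset.Icc 1 (r * k - 2 * r + 1) ∧
      (∑ i, y i) = z ∧ ((∑ i, χ (y i)) + χ z) % r = 0 := by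
  rcases Nat.lt_or_ge r 2 with hr1 | hr2
  · -- r = 1
    have hre : r = 1 := by omega
    subst hre
    refine ⟨fun _ => 1, k - 1, fun i => ?_, ?_, ?_, ?_⟩
    · show (1 : ℕ) ∈ Finset.Icc 1 (1 * k - 2 * 1 + 1)
      exact Finset.mem_Icc.mpr ⟨by omega, by omega⟩
    · exact Finset.mem_Icc.mpr ⟨by omega, by omega⟩
    · simp [Finset.sum_const, Finset.card_univ]
    · simp [Nat.mod_one]
  rcases Nat.lt_or_ge r 3 with hr2' | hr3
  · -- r = 2 : contradiction
    have hre : r = 2 := by omega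
    subst hre
    norm_num at h2
    omega
  -- r ≥ 3
  obtain ⟨M, hM, h3M⟩ : ∃ M, r * k = M ∧ 3 * k ≤ M :=
    ⟨r * k, rfl, Nat.mul_le_mul_right k hr3⟩
  rw [hM] at hχ ⊢
  have hk1 : 0 < k - 1 := by omega
  have hχ2 : χ 2 ≤ 1 := hχ 2 (Finset.mem_Icc.mpr ⟨by omega, by omega⟩)
  have hχ2k : χ (2 * k - 2) ≤ 1 := hχ (2 * k - 2) (Finset.mem_Icc.mpr ⟨by omega, by omega⟩)
  rcases Nat.le_one_iff_eq_zero_or_eq_one.mp hχ2 with hc2 | hc2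
  · -- χ 2 = 0 : y = (2,1,...,1), z = k
    refine ⟨fun i => if (i : ℕ) = 0 then 2 else 1, k, fun i => ?_, ?_, ?_, ?_⟩
    · by_cases h : (i : ℕ) = 0 <;> simp only [h, if_true, if_false, reduceIte] <;>
        exact Finset.mem_Icc.mpr ⟨by omega, by omega⟩
    · exact Finset.mem_Icc.mpr ⟨by omega, by omega⟩
    · rw [fin_sum_ite_aux _ _ _ hk1]; omega
    · have : (∑ i : Fin (k-1), χ (if (i : ℕ) = 0 then 2 else 1))
          = χ 2 + (k - 1 - 1) * χ 1 := by
        simp_rw [apply_ite χ]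
        exact fin_sum_ite_aux _ _ _ hk1
      rw [this, hc2, h1, h3]
      simp
  · -- χ 2 = 1
    rcases Nat.le_one_iff_eq_zero_or_eq_one.mp hχ2k with hc2k | hc2k
    · -- χ (2k-2) = 0 : y = (k,1,...,1), z = 2k-2
      refine ⟨fun i => if (i : ℕ) = 0 then k else 1, 2 * k - 2, fun i => ?_, ?_, ?_, ?_⟩
      · by_cases h : (i : ℕ) = 0 <;> simp only [h, if_true, if_false, reduceIte] <;>
          exact Finset.mem_Icc.mpr ⟨by omega, by omega⟩
      · exact Finset.mem_Icc.mpr ⟨by omega, by omega⟩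
      · rw [fin_sum_ite_aux _ _ _ hk1]; omega
      · have : (∑ i : Fin (k-1), χ (if (i : ℕ) = 0 then k else 1))
            = χ k + (k - 1 - 1) * χ 1 := by
          simp_rw [apply_ite χ]
          exact fin_sum_ite_aux _ _ _ hk1
        rw [this, hc2k, h1, h3]
        simp
    · -- χ (2k-2) = 1 : y = (2,...,2), z = 2k-2
      refine ⟨fun _ => 2, 2 * k - 2, fun i => ?_, ?_, ?_, ?_⟩
      · show (2 : ℕ) ∈ Finset.Icc 1 (M - 2 * r + 1)
        exact Finset.mem_Icc.mpr ⟨by omega, by omega⟩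
      · exact Finset.mem_Icc.mpr ⟨by omega, by omega⟩
      · simp [Finset.sum_const, Finset.card_univ]; omega
      · simp only [Finset.sum_const, Finset.card_univ, Fintype.card_fin, smul_eq_mul,
          hc2, hc2k, mul_one]
        have hk : (k - 1) + 1 = k := by omega
        rw [hk]
        obtain ⟨m, rfl⟩ := hdvd
        simp [Nat.mul_mod_right]
end

section
/- Let k and r be positive integers with r | k and k ≥ 2r, and let χ: [1, rk-2r+1] → {0,1} satisfy χ(1) = 0, χ(r-1) = 1, and χ(rk-2r-1) = 0. Then there exist x₁,...,x_k in [1, rk-2r+1] with x₁ + ⋯ + x_{k-1} = x_k and ∑_{i=1}^k χ(x_i) ≡ 0 (mod r). -/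
theorem stmt7 (k r : ℕ) (hr : 0 < r) (hdvd : r ∣ k) (hkr : 2 * r ≤ k)
    (χ : ℕ → ℕ) (hχ : ∀ n ∈ Finset.Icc 1 (r * k - 2 * r + 1), χ n ≤ 1)
    (h1 : χ 1 = 0) (h2 : χ (r - 1) = 1) (h3 : χ (r * k - 2 * r - 1) = 0) :
    ∃ (y : Fin (k - 1) → ℕ) (z : ℕ),
      (∀ i, y i ∈ Finset.Icc 1 (r * k - 2 * r + 1)) ∧ z ∈ Finset.Icc 1 (r * k - 2 * r + 1) ∧
      (∑ i, y i) = z ∧ ((∑ i, χ (y i)) + χ z) % r = 0 := by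
  obtain ⟨m, hm⟩ := hdvd
  rcases Nat.lt_or_ge r 2 with hr1 | hr2
  · -- r = 1
    have hrr : r = 1 := by omega
    subst hrr
    have hk2 : 2 ≤ k := by omega
    refine ⟨fun _ => 1, k - 1, ?_, ?_, ?_, ?_⟩
    · intro i; simp only [Finset.mem_Icc]; omega
    · simp only [Finset.mem_Icc]; omega
    · simp [Finset.sum_const]
    · simp [Nat.mod_one]
  · -- r ≥ 2
    have hm2 : 2 ≤ m := by nlinarith
    have hkm : m + 2 ≤ k := by nlinarith
    have hkrk : k + 2 * r ≤ r * k := by nlinarith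
    set v : ℕ := k - m - 1 with hv
    have hv1 : 1 ≤ v := by omega
    have hvle : v ≤ r * k - 2 * r + 1 := by omega
    have hrk : r ≤ k - 1 := by omega
    refine ⟨fun i => if (i : ℕ) < r then v else 1, r * k - 2 * r - 1, ?_, ?_, ?_, ?_⟩
    · intro i
      by_cases h : (i : ℕ) < r <;> simp only [h, if_true, if_false, Finset.mem_Icc] <;> omega
    · simp only [Finset.mem_Icc]; omega
    · rw [Fin.sum_univ_eq_sum_range (fun i => if i < r then v else 1)]
      rw [Finset.range_eq_Ico, ← Finset.sum_Ico_consecutive _ (Nat.zero_le r) hrk]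
      have e1 : ∑ i ∈ Finset.Ico 0 r, (if i < r then v else 1) = r * v :=
        calc ∑ i ∈ Finset.Ico 0 r, (if i < r then v else 1)
            = ∑ _i ∈ Finset.Ico 0 r, v := Finset.sum_congr rfl (fun i hi => by
              simp only [Finset.mem_Ico] at hi; simp [hi.2])
          _ = r * v := by simp [Nat.card_Ico]
      have e2 : ∑ i ∈ Finset.Ico r (k - 1), (if i < r then v else 1) = k - 1 - r :=
        calc ∑ i ∈ Finset.Ico r (k - 1), (if i < r then v else 1)
            = ∑ _i ∈ Finset.Ico r (k - 1), 1 := Finset.sum_congr rfl (fun i hi => by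
              simp only [Finset.mem_Ico] at hi; simp [Nat.not_lt.mpr hi.1])
          _ = k - 1 - r := by simp [Nat.card_Ico]
      rw [e1, e2]
      have : r * v = r * k - r * m - r := by
        rw [hv, Nat.mul_sub, Nat.mul_sub, mul_one]
      omega
    · rw [Fin.sum_univ_eq_sum_range (fun i => χ (if i < r then v else 1))]
      rw [Finset.range_eq_Ico, ← Finset.sum_Ico_consecutive _ (Nat.zero_le r) hrk]
      have e1 : ∑ i ∈ Finset.Ico 0 r, χ (if i < r then v else 1) = r * χ v :=
        calc ∑ i ∈ Finset.Ico 0 r, χ (if i < r then v else 1)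
            = ∑ _i ∈ Finset.Ico 0 r, χ v := Finset.sum_congr rfl (fun i hi => by
              simp only [Finset.mem_Ico] at hi; simp [hi.2])
          _ = r * χ v := by simp [Nat.card_Ico]
      have e2 : ∑ i ∈ Finset.Ico r (k - 1), χ (if i < r then v else 1) = 0 :=
        calc ∑ i ∈ Finset.Ico r (k - 1), χ (if i < r then v else 1)
            = ∑ _i ∈ Finset.Ico r (k - 1), χ 1 := Finset.sum_congr rfl (fun i hi => by
              simp only [Finset.mem_Ico] at hi; simp [Nat.not_lt.mpr hi.1])
          _ = 0 := by simp [h1]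
      rw [e1, e2, h3]
      simp [Nat.mul_mod_right]
end

section
/- Let k and r be positive integers with r | k and k ≥ 2r, and let χ: [1, rk-2r+1] → {0,1} satisfy χ(1) = 0, χ(r-1) = 1, and χ(rk-2r+1) = 1. Then there exist x₁,...,x_k in [1, rk-2r+1] with x₁ + ⋯ + x_{k-1} = x_k and ∑_{i=1}^k χ(x_i) ≡ 0 (mod r). -/
lemma sum_range_ite_aux (n m c d : ℕ) (h : m ≤ n) :
    ∑ j ∈ Finset.range n, (if j < m then c else d) = m * c + (n - m) * d := by
  rw [Finset.range_eq_Ico, ← Finset.sum_Ico_consecutive _ (Nat.zero_le m) h]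
  have e1 : ∑ j ∈ Finset.Ico 0 m, (if j < m then c else d) = m * c := by
    rw [Finset.sum_congr rfl fun j hj => if_pos (Finset.mem_Ico.mp hj).2]
    simp [mul_comm]
  have e2 : ∑ j ∈ Finset.Ico m n, (if j < m then c else d) = (n - m) * d := by
    rw [Finset.sum_congr rfl fun j hj => if_neg (Nat.not_lt.mpr (Finset.mem_Ico.mp hj).1)]
    simp [mul_comm]
  rw [e1, e2]

theorem stmt8 (k r : ℕ) (hr : 0 < r) (hdvd : r ∣ k) (hkr : 2 * r ≤ k)
    (χ : ℕ → ℕ) (hχ : ∀ n ∈ Finset.Icc 1 (r * k - 2 * r + 1), χ n ≤ 1)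
    (h1 : χ 1 = 0) (h2 : χ (r - 1) = 1) (h3 : χ (r * k - 2 * r + 1) = 1) :
    ∃ (y : Fin (k - 1) → ℕ) (z : ℕ),
      (∀ i, y i ∈ Finset.Icc 1 (r * k - 2 * r + 1)) ∧ z ∈ Finset.Icc 1 (r * k - 2 * r + 1) ∧
      (∑ i, y i) = z ∧ ((∑ i, χ (y i)) + χ z) % r = 0 := by
  obtain ⟨a, rfl⟩ : ∃ a, r = a + 1 := ⟨r - 1, by omega⟩
  obtain ⟨b, rfl⟩ : ∃ b, k = 2 * (a + 1) + b := ⟨k - 2 * (a + 1), by omega⟩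
  obtain ⟨M, hM, hM2, hM3⟩ :
      ∃ M, (a + 1) * (2 * (a + 1) + b) = 2 * (a + 1) + M ∧ 2 * a + b ≤ M ∧
        a * (2 * (a + 1) + b - 1) + (2 * (a + 1) + b - 1 - a) * 1 = M + 1 := by
    refine ⟨2 * a * a + 2 * a + a * b + b, by ring, by nlinarith, ?_⟩
    have e1 : 2 * (a + 1) + b - 1 = 2 * a + 1 + b := by omega
    have e2 : 2 * a + 1 + b - a = a + 1 + b := by omega
    rw [e1, e2]; ring
  rw [hM, Nat.add_sub_cancel_left] at hχ h3 ⊢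
  have hk1 : χ (2 * (a + 1) + b - 1) ≤ 1 := hχ _ (Finset.mem_Icc.mpr ⟨by omega, by omega⟩)
  rcases Nat.le_one_iff_eq_zero_or_eq_one.mp hk1 with h0 | h0
  · -- χ(k-1) = 0 : all ones
    refine ⟨fun _ => 1, 2 * (a + 1) + b - 1, fun i => ?_,
      Finset.mem_Icc.mpr ⟨by omega, by omega⟩, ?_, ?_⟩
    · show (1:ℕ) ∈ _
      exact Finset.mem_Icc.mpr ⟨le_refl _, by omega⟩
    · simp
    · simp [h1, h0]
  · -- χ(k-1) = 1 : a copies of k-1, rest ones, z = M+1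
    refine ⟨fun i => if (i : ℕ) < a then 2 * (a + 1) + b - 1 else 1, M + 1, ?_, ?_, ?_, ?_⟩
    · intro i
      by_cases h : (i : ℕ) < a <;> simp only [h, if_true, if_false, Finset.mem_Icc] <;> omega
    · exact Finset.mem_Icc.mpr ⟨by omega, le_refl _⟩
    · rw [Fin.sum_univ_eq_sum_range (fun j => if j < a then 2 * (a + 1) + b - 1 else 1),
        sum_range_ite_aux _ _ _ _ (by omega)]
      exact hM3
    · have : ∀ i : Fin (2 * (a + 1) + b - 1),
          χ (if (i : ℕ) < a then 2 * (a + 1) + b - 1 else 1)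
            = if (i : ℕ) < a then 1 else 0 := by
        intro i; by_cases h : (i : ℕ) < a <;> simp [h, h0, h1]
      rw [Finset.sum_congr rfl fun i _ => this i,
        Fin.sum_univ_eq_sum_range (fun j => if j < a then 1 else 0),
        sum_range_ite_aux _ _ _ _ (by omega), h3]
      simp
end

section
/- Let k be a positive integer divisible by 4 with k ≥ 8. Then every 2-coloring χ: [1, 4k-7] → {0,1} admits a solution (x₁,...,x_k) in [1, 4k-7]^k to x₁ + ⋯ + x_{k-1} = x_k with ∑_{i=1}^k χ(x_i) ≡ 0 (mod 4). -/
private lemma sum_getD_aux (f : ℕ → ℕ) :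
    ∀ (l : List ℕ), ∑ i ∈ Finset.range l.length, f (l.getD i 1) = (l.map f).sum := by
  intro l
  induction l with
  | nil => simp
  | cons a t ih =>
    rw [List.length_cons, Finset.sum_range_succ']
    simp only [List.getD_cons_succ, List.getD_cons_zero, List.map_cons, List.sum_cons, ih]
    omega

private theorem build_s9 (k : ℕ) (hk : 8 ≤ k) (χ : ℕ → ℕ) (L : List ℕ) (v z : ℕ)
    (hlen : L.length ≤ k - 1)
    (hmem : ∀ x ∈ L, x ∈ Finset.Icc 1 (4 * k - 7))
    (hv : v ∈ Finset.Icc 1 (4 * k - 7))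
    (hz : z ∈ Finset.Icc 1 (4 * k - 7))
    (hsum : L.sum + (k - 1 - L.length) * v = z)
    (hmod : ((L.map χ).sum + (k - 1 - L.length) * χ v + χ z) % 4 = 0) :
    ∃ (y : Fin (k - 1) → ℕ) (z' : ℕ),
      (∀ i, y i ∈ Finset.Icc 1 (4 * k - 7)) ∧ z' ∈ Finset.Icc 1 (4 * k - 7) ∧
      (∑ i, y i) = z' ∧ ((∑ i, χ (y i)) + χ z') % 4 = 0 := by
  set l := L ++ List.replicate (k - 1 - L.length) v with hl
  have hlL : l.length = k - 1 := by
    rw [hl, List.length_append, List.length_replicate]; omega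
  have key : ∀ f : ℕ → ℕ,
      (∑ i : Fin (k - 1), f (l.getD i 1)) = (L.map f).sum + (k - 1 - L.length) * f v := by
    intro f
    rw [Fin.sum_univ_eq_sum_range (fun i => f (l.getD i 1)) (k - 1), ← hlL, sum_getD_aux]
    rw [hl, List.map_append, List.sum_append, List.map_replicate, List.sum_replicate]
    simp [smul_eq_mul]
  have keyid : (∑ i : Fin (k - 1), l.getD (↑i) 1) = L.sum + (k - 1 - L.length) * v := by
    have := key (fun x => x); simpa using this
  have keyχ : (∑ i : Fin (k - 1), χ (l.getD (↑i) 1))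
      = (L.map χ).sum + (k - 1 - L.length) * χ v := key χ
  refine ⟨fun i => l.getD i 1, z, ?_, hz, ?_, ?_⟩
  · intro i
    show l.getD (↑i) 1 ∈ Finset.Icc 1 (4 * k - 7)
    have hi : (i : ℕ) < l.length := by rw [hlL]; exact i.2
    have hmem' : l.getD (↑i) 1 ∈ l := by
      rw [List.getD_eq_getElem l 1 hi]; exact List.getElem_mem _
    rcases List.mem_append.mp hmem' with h | h
    · exact hmem _ h
    · rw [List.eq_of_mem_replicate h]; exact hv
  · show (∑ i : Fin (k - 1), l.getD (↑i) 1) = z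
    rw [keyid]; exact hsum
  · show ((∑ i : Fin (k - 1), χ (l.getD (↑i) 1)) + χ z) % 4 = 0
    rw [keyχ]; exact hmod

private theorem main' (k : ℕ) (hdvd : 4 ∣ k) (hk : 8 ≤ k)
    (χ : ℕ → ℕ) (hχ : ∀ n ∈ Finset.Icc 1 (4 * k - 7), χ n ≤ 1) (h1 : χ 1 = 0) :
    ∃ (y : Fin (k - 1) → ℕ) (z : ℕ),
      (∀ i, y i ∈ Finset.Icc 1 (4 * k - 7)) ∧ z ∈ Finset.Icc 1 (4 * k - 7) ∧
      (∑ i, y i) = z ∧ ((∑ i, χ (y i)) + χ z) % 4 = 0 := by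
  have hm : ∀ n, 1 ≤ n → n ≤ 4 * k - 7 → n ∈ Finset.Icc 1 (4 * k - 7) := by
    intro n h h'; rw [Finset.mem_Icc]; exact ⟨h, h'⟩
  have hv1 : (1 : ℕ) ∈ Finset.Icc 1 (4 * k - 7) := hm 1 le_rfl (by omega)
  have hv2 : (2 : ℕ) ∈ Finset.Icc 1 (4 * k - 7) := hm 2 (by omega) (by omega)
  have h2 : χ 2 = 0 ∨ χ 2 = 1 := by have := hχ 2 hv2; omega
  rcases h2 with h2 | h2
  · -- χ 2 = 0
    by_cases hex : ∃ j, 3 ≤ j ∧ j ≤ k - 2 ∧ χ j = 1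
    · -- take minimal such j
      classical
      obtain ⟨hj3, hjk, hjc⟩ := Nat.find_spec hex
      set j := Nat.find hex with hjdef
      have hjm1 : χ (j - 1) = 0 := by
        rcases Nat.lt_or_ge (j - 1) 3 with h | h
        · have hj2 : j - 1 = 2 := by omega
          rw [hj2]; exact h2
        · have hne := Nat.find_min hex (m := j - 1) (by omega)
          have hle : χ (j - 1) ≤ 1 := hχ _ (hm _ (by omega) (by omega))
          rw [not_and] at hne
          have h' : ¬ (j - 1 ≤ k - 2 ∧ χ (j - 1) = 1) := hne h
          rw [not_and] at h'
          have := h' (by omega)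
          omega
      have hzc : χ (k - 4 + 3 * j) = 0 ∨ χ (k - 4 + 3 * j) = 1 := by
        have := hχ (k - 4 + 3 * j) (hm _ (by omega) (by omega))
        omega
      rcases hzc with hzc | hzc
      · refine build_s9 k hk χ [2, 2, 2, j - 1, j - 1, j - 1] 1 (k - 4 + 3 * j)
          (by simp only [List.length_cons, List.length_nil]; omega)
          (by intro x hx; fin_cases hx <;> exact hm _ (by omega) (by omega))
          hv1 (hm _ (by omega) (by omega))
          (by simp only [List.sum_cons, List.sum_nil, List.length_cons, List.length_nil]; omega) ?_
        simp only [List.map_cons, List.map_nil, List.sum_cons, List.sum_nil,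
          List.length_cons, List.length_nil, h1, h2, hjm1, hzc]
        omega
      · refine build_s9 k hk χ [j, j, j] 1 (k - 4 + 3 * j)
          (by simp only [List.length_cons, List.length_nil]; omega)
          (by intro x hx; fin_cases hx <;> exact hm _ (by omega) (by omega))
          hv1 (hm _ (by omega) (by omega))
          (by simp only [List.sum_cons, List.sum_nil, List.length_cons, List.length_nil]; omega) ?_
        simp only [List.map_cons, List.map_nil, List.sum_cons, List.sum_nil,
          List.length_cons, List.length_nil, h1, hjc, hzc]
        omega
    · -- all of [3, k-2] colored 0
      have hall : ∀ j, 3 ≤ j → j ≤ k - 2 → χ j = 0 := by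
        intro j hj hj'
        have hne : ¬ (3 ≤ j ∧ j ≤ k - 2 ∧ χ j = 1) := fun h => hex ⟨j, h⟩
        have hle : χ j ≤ 1 := hχ _ (hm _ (by omega) (by omega))
        rw [not_and] at hne
        have h' := hne hj
        rw [not_and] at h'
        have := h' hj'
        omega
      have hA : χ (k - 1) = 0 ∨ χ (k - 1) = 1 := by
        have := hχ (k - 1) (hm _ (by omega) (by omega)); omega
      rcases hA with hA | hA
      · refine build_s9 k hk χ [] 1 (k - 1)
          (by simp)
          (by intro x hx; simp at hx)
          hv1 (hm _ (by omega) (by omega))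
          (by simp only [List.sum_nil, List.length_nil]; omega) ?_
        simp only [List.map_nil, List.sum_nil, List.length_nil, h1, hA]
        omega
      · have hW : χ (4 * k - 7) = 0 ∨ χ (4 * k - 7) = 1 := by
          have := hχ (4 * k - 7) (hm _ (by omega) (by omega)); omega
        rcases hW with hW | hW
        · have hc4 : χ 4 = 0 := hall 4 (by omega) (by omega)
          have hck2 : χ (k - 2) = 0 := hall (k - 2) (by omega) (by omega)
          refine build_s9 k hk χ [4, k - 2, k - 2, k - 2] 1 (4 * k - 7)
            (by simp only [List.length_cons, List.length_nil]; omega)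
            (by intro x hx; fin_cases hx <;> exact hm _ (by omega) (by omega))
            hv1 (hm _ (by omega) (by omega))
            (by simp only [List.sum_cons, List.sum_nil, List.length_cons, List.length_nil]; omega) ?_
          simp only [List.map_cons, List.map_nil, List.sum_cons, List.sum_nil,
            List.length_cons, List.length_nil, h1, hc4, hck2, hW]
          omega
        · refine build_s9 k hk χ [k - 1, k - 1, k - 1] 1 (4 * k - 7)
            (by simp only [List.length_cons, List.length_nil]; omega)
            (by intro x hx; fin_cases hx <;> exact hm _ (by omega) (by omega))
            hv1 (hm _ (by omega) (by omega))
            (by simp only [List.sum_cons, List.sum_nil, List.length_cons, List.length_nil]; omega) ?_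
          simp only [List.map_cons, List.map_nil, List.sum_cons, List.sum_nil,
            List.length_cons, List.length_nil, h1, hA, hW]
          omega
  · -- χ 2 = 1 : eleven templates
    have T1 : χ (3) = 0 → χ (k + 3) = 0 →
        ∃ (y : Fin (k - 1) → ℕ) (z : ℕ),
        (∀ i, y i ∈ Finset.Icc 1 (4 * k - 7)) ∧ z ∈ Finset.Icc 1 (4 * k - 7) ∧
        (∑ i, y i) = z ∧ ((∑ i, χ (y i)) + χ z) % 4 = 0 := by
      intro h0' h1'
      refine build_s9 k hk χ [3, 3] 1 (k + 3)
        (by simp only [List.length_cons, List.length_nil]; omega)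
        (by intro x hx; fin_cases hx <;> exact hm _ (by omega) (by omega))
        hv1 (hm _ (by omega) (by omega))
        (by simp only [List.sum_cons, List.sum_nil, List.length_cons, List.length_nil]; omega) ?_
      simp only [List.map_cons, List.map_nil, List.sum_cons, List.sum_nil,
        List.length_cons, List.length_nil, h1, h2, h0', h1']
      omega
    have T2 : χ (2 * k + 1) = 0 → χ (3 * k - 1) = 0 →
        ∃ (y : Fin (k - 1) → ℕ) (z : ℕ),
        (∀ i, y i ∈ Finset.Icc 1 (4 * k - 7)) ∧ z ∈ Finset.Icc 1 (4 * k - 7) ∧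
        (∑ i, y i) = z ∧ ((∑ i, χ (y i)) + χ z) % 4 = 0 := by
      intro h0' h1'
      refine build_s9 k hk χ [2 * k + 1] 1 (3 * k - 1)
        (by simp only [List.length_cons, List.length_nil]; omega)
        (by intro x hx; fin_cases hx <;> exact hm _ (by omega) (by omega))
        hv1 (hm _ (by omega) (by omega))
        (by simp only [List.sum_cons, List.sum_nil, List.length_cons, List.length_nil]; omega) ?_
      simp only [List.map_cons, List.map_nil, List.sum_cons, List.sum_nil,
        List.length_cons, List.length_nil, h1, h2, h0', h1']
      omega
    have T3 : χ (k + 3) = 1 → χ (3 * k - 1) = 1 →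
        ∃ (y : Fin (k - 1) → ℕ) (z : ℕ),
        (∀ i, y i ∈ Finset.Icc 1 (4 * k - 7)) ∧ z ∈ Finset.Icc 1 (4 * k - 7) ∧
        (∑ i, y i) = z ∧ ((∑ i, χ (y i)) + χ z) % 4 = 0 := by
      intro h0' h1'
      refine build_s9 k hk χ [k + 3] 2 (3 * k - 1)
        (by simp only [List.length_cons, List.length_nil]; omega)
        (by intro x hx; fin_cases hx <;> exact hm _ (by omega) (by omega))
        hv2 (hm _ (by omega) (by omega))
        (by simp only [List.sum_cons, List.sum_nil, List.length_cons, List.length_nil]; omega) ?_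
      simp only [List.map_cons, List.map_nil, List.sum_cons, List.sum_nil,
        List.length_cons, List.length_nil, h1, h2, h0', h1']
      omega
    have T4 : χ (3) = 1 → χ (k) = 1 → χ (2 * k + 1) = 1 →
        ∃ (y : Fin (k - 1) → ℕ) (z : ℕ),
        (∀ i, y i ∈ Finset.Icc 1 (4 * k - 7)) ∧ z ∈ Finset.Icc 1 (4 * k - 7) ∧
        (∑ i, y i) = z ∧ ((∑ i, χ (y i)) + χ z) % 4 = 0 := by
      intro h0' h1' h2'
      refine build_s9 k hk χ [2, 3, k] 1 (2 * k + 1)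
        (by simp only [List.length_cons, List.length_nil]; omega)
        (by intro x hx; fin_cases hx <;> exact hm _ (by omega) (by omega))
        hv1 (hm _ (by omega) (by omega))
        (by simp only [List.sum_cons, List.sum_nil, List.length_cons, List.length_nil]; omega) ?_
      simp only [List.map_cons, List.map_nil, List.sum_cons, List.sum_nil,
        List.length_cons, List.length_nil, h1, h2, h0', h1', h2']
      omega
    have T5 : χ (3) = 1 → χ (k - 1) = 0 → χ (2 * k + 2) = 0 →
        ∃ (y : Fin (k - 1) → ℕ) (z : ℕ),
        (∀ i, y i ∈ Finset.Icc 1 (4 * k - 7)) ∧ z ∈ Finset.Icc 1 (4 * k - 7) ∧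
        (∑ i, y i) = z ∧ ((∑ i, χ (y i)) + χ z) % 4 = 0 := by
      intro h0' h1' h2'
      refine build_s9 k hk χ [2, 2, 2, 3, k - 1] 1 (2 * k + 2)
        (by simp only [List.length_cons, List.length_nil]; omega)
        (by intro x hx; fin_cases hx <;> exact hm _ (by omega) (by omega))
        hv1 (hm _ (by omega) (by omega))
        (by simp only [List.sum_cons, List.sum_nil, List.length_cons, List.length_nil]; omega) ?_
      simp only [List.map_cons, List.map_nil, List.sum_cons, List.sum_nil,
        List.length_cons, List.length_nil, h1, h2, h0', h1', h2']
      omega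
    have T6 : χ (3) = 1 → χ (k - 1) = 0 → χ (2 * k + 2) = 1 →
        ∃ (y : Fin (k - 1) → ℕ) (z : ℕ),
        (∀ i, y i ∈ Finset.Icc 1 (4 * k - 7)) ∧ z ∈ Finset.Icc 1 (4 * k - 7) ∧
        (∑ i, y i) = z ∧ ((∑ i, χ (y i)) + χ z) % 4 = 0 := by
      intro h0' h1' h2'
      refine build_s9 k hk χ [2, 3, 3, k - 1] 1 (2 * k + 2)
        (by simp only [List.length_cons, List.length_nil]; omega)
        (by intro x hx; fin_cases hx <;> exact hm _ (by omega) (by omega))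
        hv1 (hm _ (by omega) (by omega))
        (by simp only [List.sum_cons, List.sum_nil, List.length_cons, List.length_nil]; omega) ?_
      simp only [List.map_cons, List.map_nil, List.sum_cons, List.sum_nil,
        List.length_cons, List.length_nil, h1, h2, h0', h1', h2']
      omega
    have T7 : χ (k) = 0 → χ (3 * k - 3) = 0 →
        ∃ (y : Fin (k - 1) → ℕ) (z : ℕ),
        (∀ i, y i ∈ Finset.Icc 1 (4 * k - 7)) ∧ z ∈ Finset.Icc 1 (4 * k - 7) ∧
        (∑ i, y i) = z ∧ ((∑ i, χ (y i)) + χ z) % 4 = 0 := by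
      intro h0' h1'
      refine build_s9 k hk χ [k, k] 1 (3 * k - 3)
        (by simp only [List.length_cons, List.length_nil]; omega)
        (by intro x hx; fin_cases hx <;> exact hm _ (by omega) (by omega))
        hv1 (hm _ (by omega) (by omega))
        (by simp only [List.sum_cons, List.sum_nil, List.length_cons, List.length_nil]; omega) ?_
      simp only [List.map_cons, List.map_nil, List.sum_cons, List.sum_nil,
        List.length_cons, List.length_nil, h1, h2, h0', h1']
      omega
    have T8 : χ (k - 1) = 0 → χ (3 * k - 1) = 0 →
        ∃ (y : Fin (k - 1) → ℕ) (z : ℕ),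
        (∀ i, y i ∈ Finset.Icc 1 (4 * k - 7)) ∧ z ∈ Finset.Icc 1 (4 * k - 7) ∧
        (∑ i, y i) = z ∧ ((∑ i, χ (y i)) + χ z) % 4 = 0 := by
      intro h0' h1'
      refine build_s9 k hk χ [2, 2, 2, 2, k - 1, k - 1] 1 (3 * k - 1)
        (by simp only [List.length_cons, List.length_nil]; omega)
        (by intro x hx; fin_cases hx <;> exact hm _ (by omega) (by omega))
        hv1 (hm _ (by omega) (by omega))
        (by simp only [List.sum_cons, List.sum_nil, List.length_cons, List.length_nil]; omega) ?_
      simp only [List.map_cons, List.map_nil, List.sum_cons, List.sum_nil,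
        List.length_cons, List.length_nil, h1, h2, h0', h1']
      omega
    have T9 : χ (3) = 1 → χ (k - 1) = 1 → χ (3 * k - 3) = 1 →
        ∃ (y : Fin (k - 1) → ℕ) (z : ℕ),
        (∀ i, y i ∈ Finset.Icc 1 (4 * k - 7)) ∧ z ∈ Finset.Icc 1 (4 * k - 7) ∧
        (∑ i, y i) = z ∧ ((∑ i, χ (y i)) + χ z) % 4 = 0 := by
      intro h0' h1' h2'
      refine build_s9 k hk χ [3, k - 1, k - 1] 1 (3 * k - 3)
        (by simp only [List.length_cons, List.length_nil]; omega)
        (by intro x hx; fin_cases hx <;> exact hm _ (by omega) (by omega))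
        hv1 (hm _ (by omega) (by omega))
        (by simp only [List.sum_cons, List.sum_nil, List.length_cons, List.length_nil]; omega) ?_
      simp only [List.map_cons, List.map_nil, List.sum_cons, List.sum_nil,
        List.length_cons, List.length_nil, h1, h2, h0', h1', h2']
      omega
    have T10 : χ (3) = 1 → χ (k) = 1 → χ (3 * k - 1) = 1 →
        ∃ (y : Fin (k - 1) → ℕ) (z : ℕ),
        (∀ i, y i ∈ Finset.Icc 1 (4 * k - 7)) ∧ z ∈ Finset.Icc 1 (4 * k - 7) ∧
        (∑ i, y i) = z ∧ ((∑ i, χ (y i)) + χ z) % 4 = 0 := by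
      intro h0' h1' h2'
      refine build_s9 k hk χ [3, k, k] 1 (3 * k - 1)
        (by simp only [List.length_cons, List.length_nil]; omega)
        (by intro x hx; fin_cases hx <;> exact hm _ (by omega) (by omega))
        hv1 (hm _ (by omega) (by omega))
        (by simp only [List.sum_cons, List.sum_nil, List.length_cons, List.length_nil]; omega) ?_
      simp only [List.map_cons, List.map_nil, List.sum_cons, List.sum_nil,
        List.length_cons, List.length_nil, h1, h2, h0', h1', h2']
      omega
    have T11 : χ (3) = 0 → χ (k - 1) = 1 → χ (3 * k - 1) = 0 →
        ∃ (y : Fin (k - 1) → ℕ) (z : ℕ),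
        (∀ i, y i ∈ Finset.Icc 1 (4 * k - 7)) ∧ z ∈ Finset.Icc 1 (4 * k - 7) ∧
        (∑ i, y i) = z ∧ ((∑ i, χ (y i)) + χ z) % 4 = 0 := by
      intro h0' h1' h2'
      refine build_s9 k hk χ [2, 2, 3, k - 1, k - 1] 1 (3 * k - 1)
        (by simp only [List.length_cons, List.length_nil]; omega)
        (by intro x hx; fin_cases hx <;> exact hm _ (by omega) (by omega))
        hv1 (hm _ (by omega) (by omega))
        (by simp only [List.sum_cons, List.sum_nil, List.length_cons, List.length_nil]; omega) ?_
      simp only [List.map_cons, List.map_nil, List.sum_cons, List.sum_nil,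
        List.length_cons, List.length_nil, h1, h2, h0', h1', h2']
      omega

    have hc3 : χ 3 = 0 ∨ χ 3 = 1 := by
      have := hχ 3 (hm _ (by omega) (by omega)); omega
    have hcA : χ (k - 1) = 0 ∨ χ (k - 1) = 1 := by
      have := hχ (k - 1) (hm _ (by omega) (by omega)); omega
    have hcB : χ k = 0 ∨ χ k = 1 := by
      have := hχ k (hm _ (by omega) (by omega)); omega
    have hcC : χ (k + 3) = 0 ∨ χ (k + 3) = 1 := by
      have := hχ (k + 3) (hm _ (by omega) (by omega)); omega
    have hcD : χ (2 * k + 1) = 0 ∨ χ (2 * k + 1) = 1 := by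
      have := hχ (2 * k + 1) (hm _ (by omega) (by omega)); omega
    have hcE : χ (2 * k + 2) = 0 ∨ χ (2 * k + 2) = 1 := by
      have := hχ (2 * k + 2) (hm _ (by omega) (by omega)); omega
    have hcF : χ (3 * k - 3) = 0 ∨ χ (3 * k - 3) = 1 := by
      have := hχ (3 * k - 3) (hm _ (by omega) (by omega)); omega
    have hcG : χ (3 * k - 1) = 0 ∨ χ (3 * k - 1) = 1 := by
      have := hχ (3 * k - 1) (hm _ (by omega) (by omega)); omega
    rcases hc3 with h3 | h3 <;> rcases hcA with hA | hA <;> rcases hcB with hB | hB <;>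
      rcases hcC with hC | hC <;> rcases hcD with hD | hD <;> rcases hcE with hE | hE <;>
      rcases hcF with hF | hF <;> rcases hcG with hG | hG <;>
      first
      | exact T1 h3 hC
      | exact T2 hD hG
      | exact T3 hC hG
      | exact T4 h3 hB hD
      | exact T5 h3 hA hE
      | exact T6 h3 hA hE
      | exact T7 hB hF
      | exact T8 hA hG
      | exact T9 h3 hA hF
      | exact T10 h3 hB hG
      | exact T11 h3 hA hG

theorem stmt9 (k : ℕ) (hdvd : 4 ∣ k) (hk : 8 ≤ k)
    (χ : ℕ → ℕ) (hχ : ∀ n ∈ Finset.Icc 1 (4 * k - 7), χ n ≤ 1) :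
    ∃ (y : Fin (k - 1) → ℕ) (z : ℕ),
      (∀ i, y i ∈ Finset.Icc 1 (4 * k - 7)) ∧ z ∈ Finset.Icc 1 (4 * k - 7) ∧
      (∑ i, y i) = z ∧ ((∑ i, χ (y i)) + χ z) % 4 = 0 := by
  have hIcc1 : (1 : ℕ) ∈ Finset.Icc 1 (4 * k - 7) := by rw [Finset.mem_Icc]; omega
  have h1 : χ 1 = 0 ∨ χ 1 = 1 := by have := hχ 1 hIcc1; omega
  rcases h1 with h1 | h1
  · exact main' k hdvd hk χ hχ h1
  · set ψ : ℕ → ℕ := fun n => 1 - χ n with hψdef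
    have hψ : ∀ n ∈ Finset.Icc 1 (4 * k - 7), ψ n ≤ 1 := by
      intro n _; simp [hψdef]
    have hψ1 : ψ 1 = 0 := by simp [hψdef, h1]
    obtain ⟨y, z, hy, hz, hsum, hmod⟩ := main' k hdvd hk ψ hψ hψ1
    refine ⟨y, z, hy, hz, hsum, ?_⟩
    have hyadd : ∀ i, χ (y i) + ψ (y i) = 1 := by
      intro i
      have := hχ (y i) (hy i)
      simp only [hψdef]
      omega
    have hzadd : χ z + ψ z = 1 := by
      have := hχ z hz
      simp only [hψdef]
      omega
    have hsum2 : (∑ i, χ (y i)) + (∑ i, ψ (y i)) = k - 1 := by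
      rw [← Finset.sum_add_distrib]
      rw [Finset.sum_congr rfl (fun i _ => hyadd i)]
      simp
    omega
end

section
/- Let k be a positive integer divisible by 4 with k ≥ 8. Then the 2-color zero-sum generalized Schur number S_{z,2}(k;4) equals 4k - 7. -/
/-!
Lower bound: colour `x` by `1` exactly when `x ≥ k - 1`. In `[1, 4k - 8]` a solution has at most
two summands `≥ k - 1` (three of them already force `z ≥ 4k - 7`), while `z ≥ k - 1`; so its colour
sum is `1`, `2` or `3`.

Upper bound: as `4 ∣ k`, swapping the colours negates colour sums modulo `4`, so we may assume
`χ 1 = 0` and pad solutions with `1`s. Branching on the colours of `k - 1`, `4k - 7`, `2`, `3`, `4`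
and of `k + 2`, `k + 5`, `k + 8`, each leaf has a solution with colour sum `0` or `4`: typically
three copies of a number of colour `1` whose padded sum also has colour `1`, or else a solution
all of whose terms have colour `0`.
-/

open Finset

/-- With `n = k - 1`, `S_{z,2}(k; r)` is the least `t` for which every `2`-colouring `χ` of
`[1, t]` satisfies `ZeroSumSolvable r n t χ`. -/
def ZeroSumSolvable (r n t : ℕ) (χ : ℕ → ℕ) : Prop :=
  ∃ (y : Fin n → ℕ) (z : ℕ), (∀ i, y i ∈ Icc 1 t) ∧ z ∈ Icc 1 t ∧
    (∑ i, y i) = z ∧ ((∑ i, χ (y i)) + χ z) % r = 0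

namespace ZeroSumSolvable

variable {r n t : ℕ} {χ : ℕ → ℕ}

theorem of_list (l : List ℕ) (hn : l.length = n) (hl : 0 ∉ l) {z : ℕ}
    (hsum : l.sum = z) (hz : z ∈ Icc 1 t) (hχ : ((l.map χ).sum + χ z) % r = 0) :
    ZeroSumSolvable r n t χ := by
  subst hn hsum
  refine ⟨fun i => l[i.1], l.sum, fun i => ?_, hz, Fin.sum_univ_getElem l,
    by rwa [Fin.sum_univ_fun_getElem]⟩
  have hmem : l[i.1] ∈ l := List.getElem_mem _
  exact mem_Icc.mpr ⟨Nat.pos_of_ne_zero (ne_of_mem_of_not_mem hmem hl),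
    (List.le_sum_of_mem hmem).trans (mem_Icc.mp hz).2⟩

/-- Interchanging the two colours changes the colour sum of a solution `s` into `n + 1 - s`. -/
theorem of_compl (hr : r ∣ n + 1) (hχ : ∀ x ∈ Icc 1 t, χ x ≤ 1)
    (h : ZeroSumSolvable r n t (fun x => 1 - χ x)) : ZeroSumSolvable r n t χ := by
  obtain ⟨y, z, hy, hz, hsum, hcol⟩ := h
  refine ⟨y, z, hy, hz, hsum, Nat.mod_eq_zero_of_dvd ?_⟩
  have hpair : ∀ x ∈ Icc 1 t, (1 - χ x) + χ x = 1 := fun x hx => by have := hχ x hx; omega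
  have htotal : (∑ i, (1 - χ (y i)) + (1 - χ z)) + (∑ i, χ (y i) + χ z) = n + 1 := by
    rw [add_add_add_comm, ← sum_add_distrib, sum_congr rfl fun i _ => hpair _ (hy i), hpair z hz]
    simp
  rw [← htotal] at hr
  exact (Nat.dvd_add_right (Nat.dvd_of_mod_eq_zero hcol)).mp hr

theorem of_three_copies {a z : ℕ} (hn : 3 ≤ n) (ha : 1 ≤ a) (hz : n - 3 + 3 * a = z)
    (hzt : z ≤ t) (h1 : χ 1 = 0) (hχa : χ a = 1) (hχz : χ z = 1) : ZeroSumSolvable 4 n t χ :=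
  of_list (List.replicate (n - 3) 1 ++ [a, a, a]) (by simp; omega) (by simp; omega) (z := z)
    (by simp; omega) (by simp; omega) (by simp [h1, hχa, hχz])

end ZeroSumSolvable

theorem not_zeroSumSolvable_of_lt {n t : ℕ} (ht : t < 4 * n - 3) :
    ¬ ZeroSumSolvable 4 n t (fun x => if n ≤ x then 1 else 0) := by
  rintro ⟨y, z, hy, hz, hsum, hcol⟩
  simp only [mem_Icc] at hy hz
  set S := ∑ i, (if n ≤ y i then 1 else 0) with hS
  -- each of the `S` summands `≥ n` contributes at least `n - 1` beyond the trivial bound `1`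
  have hz_ge : n + S * (n - 1) ≤ z := by
    calc n + S * (n - 1) = ∑ i, (1 + (if n ≤ y i then 1 else 0) * (n - 1)) := by
          rw [sum_add_distrib, ← sum_mul, ← hS]
          simp
      _ ≤ ∑ i, y i := sum_le_sum fun i _ => by split_ifs <;> have := hy i <;> omega
      _ = z := hsum
  have hS_le : S ≤ 2 := by
    by_contra! h3
    have : 3 * (n - 1) ≤ S * (n - 1) := Nat.mul_le_mul_right _ h3
    omega
  simp only [show n ≤ z by omega, if_true] at hcol
  omega

open ZeroSumSolvable in
theorem zeroSumSolvable_of_apply_one_eq_zero {k : ℕ} (hdvd : 4 ∣ k) (hk : 8 ≤ k) {χ : ℕ → ℕ}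
    (hχ : ∀ x ∈ Icc 1 (4 * k - 7), χ x ≤ 1) (h1 : χ 1 = 0) :
    ZeroSumSolvable 4 (k - 1) (4 * k - 7) χ := by
  have hv (v : ℕ) (hv1 : 1 ≤ v) (hv2 : v ≤ 4 * k - 7) : χ v = 0 ∨ χ v = 1 :=
    Nat.le_one_iff_eq_zero_or_eq_one.mp (hχ v (mem_Icc.mpr ⟨hv1, hv2⟩))
  rcases hv (k - 1) (by omega) (by omega) with hk1 | hk1
  · exact of_list (List.replicate (k - 1) 1) (by simp) (by simp) (z := k - 1)
      (by simp) (by simp; omega) (by simp [h1, hk1])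
  rcases hv (4 * k - 7) (by omega) (by omega) with htop | htop
  swap
  · exact of_three_copies (a := k - 1) (by omega) (by omega) (by omega) le_rfl h1 hk1 htop
  rcases hv 2 (by omega) (by omega) with h2 | h2
  swap
  · rcases hv (k + 2) (by omega) (by omega) with h | h
    · -- colour sum `(k - 5) + 1`, which is `0 (mod 4)` because `4 ∣ k`
      exact of_list (List.replicate 2 1 ++ List.replicate (k - 5) 2 ++ [k - 1, k + 2])
        (by simp; omega) (by simp; omega) (z := 4 * k - 7) (by simp; omega) (by simp; omega)
        (by simp [h1, h2, hk1, h, htop]; omega)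
    · exact of_three_copies (a := 2) (by omega) (by omega) (by omega) (by omega) h1 h2 h
  rcases hv 3 (by omega) (by omega) with h3 | h3
  swap
  · rcases hv (k + 5) (by omega) (by omega) with h | h
    · exact of_list (List.replicate (k - 7) 1 ++ List.replicate 6 2) (by simp; omega) (by simp)
        (z := k + 5) (by simp; omega) (by simp; omega) (by simp [h1, h2, h])
    · exact of_three_copies (a := 3) (by omega) (by omega) (by omega) (by omega) h1 h3 h
  rcases hv 4 (by omega) (by omega) with h4 | h4
  swap
  · rcases hv (k + 8) (by omega) (by omega) with h | h
    · exact of_list (List.replicate (k - 6) 1 ++ 2 :: List.replicate 4 3) (by simp; omega)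
        (by simp) (z := k + 8) (by simp; omega) (by simp; omega) (by simp [h1, h2, h3, h])
    · exact of_three_copies (a := 4) (by omega) (by omega) (by omega) (by omega) h1 h4 h
  exact of_list (1 :: List.replicate (k - 2) 4) (by simp; omega) (by simp) (z := 4 * k - 7)
    (by simp; omega) (by simp; omega) (by simp [h1, h4, htop])

theorem zeroSumSolvable_of_le_one {k : ℕ} (hdvd : 4 ∣ k) (hk : 8 ≤ k) {χ : ℕ → ℕ}
    (hχ : ∀ x ∈ Icc 1 (4 * k - 7), χ x ≤ 1) : ZeroSumSolvable 4 (k - 1) (4 * k - 7) χ := by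
  have hχ1 := hχ 1 (mem_Icc.mpr ⟨le_rfl, by omega⟩)
  obtain h1 | h1 : χ 1 = 0 ∨ χ 1 = 1 := by omega
  · exact zeroSumSolvable_of_apply_one_eq_zero hdvd hk hχ h1
  · exact .of_compl (by omega) hχ <| zeroSumSolvable_of_apply_one_eq_zero hdvd hk
      (fun x _ => Nat.sub_le 1 (χ x)) (by omega)

theorem stmt10 (k : ℕ) (hdvd : 4 ∣ k) (hk : 8 ≤ k) :
    IsLeast {t : ℕ | 0 < t ∧ ∀ χ : ℕ → ℕ, (∀ n ∈ Finset.Icc 1 t, χ n ≤ 1) →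
      ∃ (y : Fin (k - 1) → ℕ) (z : ℕ),
      (∀ i, y i ∈ Finset.Icc 1 (t)) ∧ z ∈ Finset.Icc 1 (t) ∧
      (∑ i, y i) = z ∧ ((∑ i, χ (y i)) + χ z) % 4 = 0}
    (4 * k - 7) := by
  refine ⟨⟨by omega, fun χ hχ => zeroSumSolvable_of_le_one hdvd hk hχ⟩, ?_⟩
  rintro t ⟨-, ht⟩
  by_contra! hlt
  exact not_zeroSumSolvable_of_lt (n := k - 1) (t := t) (by omega)
    (ht (fun x => if k - 1 ≤ x then 1 else 0) fun x _ => by split_ifs <;> omega)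
end

section
/- Let k and r be positive integers with r | k and r ≥ 5 and k ≥ 2r, and let χ: [1, rk-2r+1] → {0,1} satisfy χ(1) = 0, χ(k-2) = 0, χ(rk-2r+1) = 0, χ(r-1) = 1, χ(r) = 1, χ(k-1) = 1, χ(k) = 1, and χ(rk-2r-1) = 1. Then there exist x₁,...,x_k in [1, rk-2r+1] with x₁ + ⋯ + x_{k-1} = x_k and ∑_{i=1}^k χ(x_i) ≡ 0 (mod r). -/
lemma sum_ite_four (A b c e v1 v2 v3 v4 : ℕ) :
    ∑ i ∈ Finset.range (A + b + c + e),
      (if i < A then v1 else if i < A + b then v2 else if i < A + b + c then v3 else v4)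
      = A * v1 + b * v2 + c * v3 + e * v4 := by
  rw [Finset.range_eq_Ico]
  rw [← Finset.sum_Ico_consecutive _ (Nat.zero_le A) (by omega : A ≤ A + b + c + e)]
  rw [← Finset.sum_Ico_consecutive _ (by omega : A ≤ A + b) (by omega : A + b ≤ A + b + c + e)]
  rw [← Finset.sum_Ico_consecutive _ (by omega : A + b ≤ A + b + c)
      (by omega : A + b + c ≤ A + b + c + e)]
  have e1 : ∑ i ∈ Finset.Ico 0 A,
      (if i < A then v1 else if i < A + b then v2 else if i < A + b + c then v3 else v4)
      = A * v1 := by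
    have h : ∀ i ∈ Finset.Ico 0 A,
        (if i < A then v1 else if i < A + b then v2 else if i < A + b + c then v3 else v4)
        = v1 := by
      intro i hi
      simp only [Finset.mem_Ico] at hi
      rw [if_pos (by omega)]
    rw [Finset.sum_congr rfl h, Finset.sum_const, Nat.card_Ico, smul_eq_mul, Nat.sub_zero]
  have e2 : ∑ i ∈ Finset.Ico A (A + b),
      (if i < A then v1 else if i < A + b then v2 else if i < A + b + c then v3 else v4)
      = b * v2 := by
    have h : ∀ i ∈ Finset.Ico A (A + b),
        (if i < A then v1 else if i < A + b then v2 else if i < A + b + c then v3 else v4)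
        = v2 := by
      intro i hi
      simp only [Finset.mem_Ico] at hi
      rw [if_neg (by omega), if_pos (by omega)]
    rw [Finset.sum_congr rfl h, Finset.sum_const, Nat.card_Ico, smul_eq_mul,
      Nat.add_sub_cancel_left]
  have e3 : ∑ i ∈ Finset.Ico (A + b) (A + b + c),
      (if i < A then v1 else if i < A + b then v2 else if i < A + b + c then v3 else v4)
      = c * v3 := by
    have h : ∀ i ∈ Finset.Ico (A + b) (A + b + c),
        (if i < A then v1 else if i < A + b then v2 else if i < A + b + c then v3 else v4)
        = v3 := by
      intro i hi
      simp only [Finset.mem_Ico] at hi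
      rw [if_neg (by omega), if_neg (by omega), if_pos (by omega)]
    rw [Finset.sum_congr rfl h, Finset.sum_const, Nat.card_Ico, smul_eq_mul,
      Nat.add_sub_cancel_left]
  have e4 : ∑ i ∈ Finset.Ico (A + b + c) (A + b + c + e),
      (if i < A then v1 else if i < A + b then v2 else if i < A + b + c then v3 else v4)
      = e * v4 := by
    have h : ∀ i ∈ Finset.Ico (A + b + c) (A + b + c + e),
        (if i < A then v1 else if i < A + b then v2 else if i < A + b + c then v3 else v4)
        = v4 := by
      intro i hi
      simp only [Finset.mem_Ico] at hi
      rw [if_neg (by omega), if_neg (by omega), if_neg (by omega)]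
    rw [Finset.sum_congr rfl h, Finset.sum_const, Nat.card_Ico, smul_eq_mul,
      Nat.add_sub_cancel_left]
  rw [e1, e2, e3, e4]
  ring

lemma sum_ite_four' (n A b c e v1 v2 v3 v4 : ℕ) (h : n = A + b + c + e) :
    ∑ i ∈ Finset.range n,
      (if i < A then v1 else if i < A + b then v2 else if i < A + b + c then v3 else v4)
      = A * v1 + b * v2 + c * v3 + e * v4 := by
  rw [h, sum_ite_four]

theorem stmt11 (k r : ℕ) (hr : 0 < r) (hdvd : r ∣ k) (hkr : 2 * r ≤ k)
    (χ : ℕ → ℕ) (hχ : ∀ n ∈ Finset.Icc 1 (r * k - 2 * r + 1), χ n ≤ 1)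
    (hr5 : 5 ≤ r)
    (h1 : χ 1 = 0) (h2 : χ (k - 2) = 0) (h3 : χ (r * k - 2 * r + 1) = 0)
    (h4 : χ (r - 1) = 1) (h5 : χ r = 1) (h6 : χ (k - 1) = 1) (h7 : χ k = 1)
    (h8 : χ (r * k - 2 * r - 1) = 1) :
    ∃ (y : Fin (k - 1) → ℕ) (z : ℕ),
      (∀ i, y i ∈ Finset.Icc 1 (r * k - 2 * r + 1)) ∧ z ∈ Finset.Icc 1 (r * k - 2 * r + 1) ∧
      (∑ i, y i) = z ∧ ((∑ i, χ (y i)) + χ z) % r = 0 := by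
  obtain ⟨q, hkq⟩ := hdvd
  have hq2 : 2 ≤ q := Nat.le_of_mul_le_mul_left (by rw [← hkq]; omega : r * 2 ≤ r * q) hr
  obtain ⟨s, hqs⟩ : ∃ s, q = s + 1 := ⟨q - 1, by omega⟩
  have hs1 : 1 ≤ s := by omega
  have hdm := Nat.div_add_mod (r - 3) s
  obtain ⟨t, ht0⟩ : ∃ t, t = (r - 3) / s := ⟨_, rfl⟩
  obtain ⟨u, hu0⟩ : ∃ u, u = (r - 3) % s := ⟨_, rfl⟩
  have hult : u < s := hu0 ▸ Nat.mod_lt _ (by omega)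
  obtain ⟨w, hw⟩ : ∃ w, u + w = s := ⟨s - u, by omega⟩
  have hw1 : 1 ≤ w := by omega
  have htu : s * t + u + 3 = r := by
    rw [ht0, hu0, hdm]; omega
  have hts : t ≤ s * t := Nat.le_mul_of_pos_left t (by omega)
  have htr : t + 3 ≤ r := by omega
  have hrw : r ≤ r * w := Nat.le_mul_of_pos_right r (by omega)
  have htw : t + 3 ≤ r * w := le_trans htr hrw
  obtain ⟨b, hb⟩ : ∃ b, b + (t + 3) = r * w := ⟨r * w - (t + 3), Nat.sub_add_cancel htw⟩
  obtain ⟨c, hc0⟩ : ∃ c, c = r * u + 2 := ⟨_, rfl⟩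
  obtain ⟨e, he0⟩ : ∃ e, e = t + 1 := ⟨_, rfl⟩
  have hbZ : (b : ℤ) + (t + 3) = r * w := by exact_mod_cast hb
  have hkZ : (k : ℤ) = r * (s + 1) := by
    rw [hkq, hqs]; push_cast; ring
  have hwZ : (u : ℤ) + w = s := by exact_mod_cast hw
  have htuZ : (s : ℤ) * t + u + 3 = r := by exact_mod_cast htu
  have hcZ : (c : ℤ) = r * u + 2 := by exact_mod_cast hc0
  have heZ : (e : ℤ) = t + 1 := by exact_mod_cast he0
  have hr1 : (1 : ℕ) ≤ r := by omega
  have hk1 : (1 : ℕ) ≤ k := by omega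
  have h5k : 5 * k ≤ r * k := Nat.mul_le_mul_right k hr5
  have h2rk : 2 * r ≤ r * k := by omega
  have hcount : (r - 1) + b + c + e + 1 = k := by
    zify [hr1]
    linear_combination hbZ - hkZ + (r : ℤ) * hwZ + hcZ + heZ
  have hsum : (r - 1) * 1 + b * (r - 1) + c * r + e * (k - 1) = r * k - 2 * r + 1 := by
    zify [hr1, hk1, h2rk]
    linear_combination ((r : ℤ) - 1) * hbZ + ((t : ℤ) + 1 - r) * hkZ
      + ((r : ℤ) ^ 2 - r) * hwZ + (r : ℤ) * htuZ + (r : ℤ) * hcZ + ((k : ℤ) - 1) * heZ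
  have hweight : b + c + e = r * (u + w) := by
    zify
    linear_combination hbZ + hcZ + heZ
  have hkk : k + 2 * r ≤ r * k := by omega
  have hkN : k ≤ r * k - 2 * r + 1 := by omega
  have hrange : k - 1 = (r - 1) + b + c + e := by omega
  refine ⟨fun i => if (i : ℕ) < r - 1 then 1 else if (i : ℕ) < (r - 1) + b then r - 1
    else if (i : ℕ) < (r - 1) + b + c then r else k - 1, r * k - 2 * r + 1, ?_, ?_, ?_, ?_⟩
  · intro i
    simp only [Finset.mem_Icc]
    split_ifs <;> omega
  · simp only [Finset.mem_Icc]
    omega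
  · rw [Fin.sum_univ_eq_sum_range (fun m => if m < r - 1 then 1 else if m < (r - 1) + b then r - 1
      else if m < (r - 1) + b + c then r else k - 1) (k - 1),
      sum_ite_four' (k - 1) (r - 1) b c e 1 (r - 1) r (k - 1) hrange]
    exact hsum
  · rw [Fin.sum_univ_eq_sum_range (fun m => χ (if m < r - 1 then 1
      else if m < (r - 1) + b then r - 1
      else if m < (r - 1) + b + c then r else k - 1)) (k - 1)]
    have hχf : ∀ m ∈ Finset.range (k - 1), χ (if m < r - 1 then 1
        else if m < (r - 1) + b then r - 1
        else if m < (r - 1) + b + c then r else k - 1) =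
        if m < r - 1 then 0 else if m < (r - 1) + b then 1
        else if m < (r - 1) + b + c then 1 else 1 := by
      intro m _
      split_ifs <;> assumption
    rw [Finset.sum_congr rfl hχf,
      sum_ite_four' (k - 1) (r - 1) b c e 0 1 1 1 hrange, h3]
    have hval : (r - 1) * 0 + b * 1 + c * 1 + e * 1 = r * (u + w) := by omega
    rw [hval]
    simp [Nat.mul_mod_right]
end

section
/- For all positive integers k and r with r | k and k ≥ 2r, every 2-coloring χ: [1, rk-2r+1] → {0,1} admits a solution (x₁,...,x_k) with all xᵢ ∈ [1, rk-2r+1] to x₁ + ⋯ + x_{k-1} = x_k satisfying ∑_{i=1}^k χ(x_i) ≡ 0 (mod r). -/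
private lemma sum_blocks (a b c v1 v2 v3 : ℕ) :
    (∑ i ∈ Finset.range (a + b + c),
      if i < a then v1 else if i < a + b then v2 else v3)
      = a * v1 + b * v2 + c * v3 := by
  rw [Finset.range_eq_Ico,
    ← Finset.sum_Ico_consecutive _ (Nat.zero_le (a + b)) (Nat.le_add_right (a + b) c),
    ← Finset.sum_Ico_consecutive _ (Nat.zero_le a) (Nat.le_add_right a b)]
  have e1 : (∑ i ∈ Finset.Ico 0 a, if i < a then v1 else if i < a + b then v2 else v3)
      = a * v1 := by
    have h : ∀ i ∈ Finset.Ico 0 a,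
        (if i < a then v1 else if i < a + b then v2 else v3) = v1 := by
      intro i hi
      rw [Finset.mem_Ico] at hi
      rw [if_pos hi.2]
    rw [Finset.sum_congr rfl h, Finset.sum_const, Nat.card_Ico, Nat.sub_zero, smul_eq_mul]
  have e2 : (∑ i ∈ Finset.Ico a (a + b), if i < a then v1 else if i < a + b then v2 else v3)
      = b * v2 := by
    have h : ∀ i ∈ Finset.Ico a (a + b),
        (if i < a then v1 else if i < a + b then v2 else v3) = v2 := by
      intro i hi
      rw [Finset.mem_Ico] at hi
      rw [if_neg (by omega), if_pos hi.2]
    rw [Finset.sum_congr rfl h, Finset.sum_const, Nat.card_Ico, smul_eq_mul,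
      Nat.add_sub_cancel_left]
  have e3 : (∑ i ∈ Finset.Ico (a + b) (a + b + c),
      if i < a then v1 else if i < a + b then v2 else v3) = c * v3 := by
    have h : ∀ i ∈ Finset.Ico (a + b) (a + b + c),
        (if i < a then v1 else if i < a + b then v2 else v3) = v3 := by
      intro i hi
      rw [Finset.mem_Ico] at hi
      rw [if_neg (by omega), if_neg (by omega)]
    rw [Finset.sum_congr rfl h, Finset.sum_const, Nat.card_Ico, smul_eq_mul,
      Nat.add_sub_cancel_left]
  rw [e1, e2, e3]

private lemma build_s19 {n r N : ℕ} (χ : ℕ → ℕ) (a b c v1 v2 v3 z : ℕ)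
    (htot : a + b + c = n)
    (h1 : v1 ∈ Finset.Icc 1 N) (h2 : v2 ∈ Finset.Icc 1 N) (h3 : v3 ∈ Finset.Icc 1 N)
    (hz : z ∈ Finset.Icc 1 N)
    (hsum : a * v1 + b * v2 + c * v3 = z)
    (hcnt : (a * χ v1 + b * χ v2 + c * χ v3 + χ z) % r = 0) :
    ∃ (y : Fin n → ℕ) (z : ℕ),
      (∀ i, y i ∈ Finset.Icc 1 N) ∧ z ∈ Finset.Icc 1 N ∧
      (∑ i, y i) = z ∧ ((∑ i, χ (y i)) + χ z) % r = 0 := by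
  subst htot
  refine ⟨fun i => if (i : ℕ) < a then v1 else if (i : ℕ) < a + b then v2 else v3, z,
    ?_, hz, ?_, ?_⟩
  · intro i
    dsimp only
    split_ifs <;> assumption
  · rw [Fin.sum_univ_eq_sum_range
      (fun m => if m < a then v1 else if m < a + b then v2 else v3) (a + b + c),
      sum_blocks]
    exact hsum
  · have key : (∑ i : Fin (a + b + c),
        χ (if (i : ℕ) < a then v1 else if (i : ℕ) < a + b then v2 else v3))
        = a * χ v1 + b * χ v2 + c * χ v3 := by
      rw [Fin.sum_univ_eq_sum_range
        (fun m => χ (if m < a then v1 else if m < a + b then v2 else v3)) (a + b + c)]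
      simp only [apply_ite χ]
      exact sum_blocks a b c (χ v1) (χ v2) (χ v3)
    rw [key]
    exact hcnt

private lemma key (k r : ℕ) (hr : 2 ≤ r) (hdvd : r ∣ k) (hkr : 2 * r ≤ k)
    (χ : ℕ → ℕ) (hχ : ∀ n ∈ Finset.Icc 1 (r * k - 2 * r + 1), χ n ≤ 1)
    (hχ1 : χ 1 = 0) :
    ∃ (y : Fin (k - 1) → ℕ) (z : ℕ),
      (∀ i, y i ∈ Finset.Icc 1 (r * k - 2 * r + 1)) ∧
      z ∈ Finset.Icc 1 (r * k - 2 * r + 1) ∧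
      (∑ i, y i) = z ∧ ((∑ i, χ (y i)) + χ z) % r = 0 := by
  have hk4 : 4 ≤ k := by omega
  have hA : 2 * k ≤ r * k := Nat.mul_le_mul_right k hr
  have hkk : k ≤ r * k := Nat.le_mul_of_pos_left k (by omega)
  have h2r : 2 * r ≤ r * k := le_trans hkr hkk
  have hkN : k - 1 ≤ r * k - 2 * r + 1 := by omega
  have h1N : 1 ≤ r * k - 2 * r + 1 := by omega
  have hmod : ∀ x : ℕ, r ∣ x → x % r = 0 := by
    intro x hx
    rcases hx with ⟨d, rfl⟩
    exact Nat.mul_mod_right r d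
  have hc : ∀ v, 1 ≤ v → v ≤ r * k - 2 * r + 1 → χ v ≤ 1 := by
    intro v hv1 hv2
    exact hχ v (Finset.mem_Icc.mpr ⟨hv1, hv2⟩)
  have m1 : (1 : ℕ) ∈ Finset.Icc 1 (r * k - 2 * r + 1) := Finset.mem_Icc.mpr ⟨le_refl 1, h1N⟩
  have mk1 : (k - 1 : ℕ) ∈ Finset.Icc 1 (r * k - 2 * r + 1) := Finset.mem_Icc.mpr ⟨by omega, hkN⟩
  have hck1 : χ (k - 1) = 0 ∨ χ (k - 1) = 1 := by have := hc (k - 1) (by omega) hkN; omega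
  rcases hck1 with hk1 | hk1
  · -- Case A : all ones
    apply build_s19 χ (k - 1) 0 0 1 1 1 (k - 1) (by omega) m1 m1 m1 mk1 (by omega)
    rw [hχ1, hk1]
    simp
  · -- χ (k-1) = 1
    have mN : (r * k - 2 * r + 1) ∈ Finset.Icc 1 (r * k - 2 * r + 1) :=
      Finset.mem_Icc.mpr ⟨h1N, le_refl _⟩
    have hcN : χ (r * k - 2 * r + 1) = 0 ∨ χ (r * k - 2 * r + 1) = 1 := by
      have := hc _ h1N (le_refl _); omega
    rcases hcN with hN | hN
    · -- χ N = 0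
      rcases Nat.lt_or_ge r 3 with hr3 | hr3
      · -- r = 2 : (k-2) twos + one 1, z = N = 2k-3
        have hr2 : r = 2 := by omega
        subst hr2
        have m2 : (2 : ℕ) ∈ Finset.Icc 1 (2 * k - 2 * 2 + 1) := Finset.mem_Icc.mpr ⟨by omega, by omega⟩
        apply build_s19 χ (k - 2) 1 0 2 1 1 (2 * k - 2 * 2 + 1) (by omega) m2 m1 m1 mN (by omega)
        rw [hχ1, hN]
        have h2d : 2 ∣ (k - 2) * χ 2 := Dvd.dvd.mul_right (by omega) (χ 2)
        apply hmod
        rcases h2d with ⟨d, hd⟩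
        exact ⟨d, by omega⟩
      · -- r ≥ 3
        have hc2 : χ 2 = 0 ∨ χ 2 = 1 := by have := hc 2 (by omega) (by omega); omega
        rcases hc2 with h2 | h2
        · -- Case F : χ 2 = 0, use minimal color-1 element s ≥ 3
          have hex : ∃ t, χ (t + 3) = 1 := by
            refine ⟨k - 4, ?_⟩
            have e : k - 4 + 3 = k - 1 := by omega
            rw [e]; exact hk1
          set t := Nat.find hex with ht
          have hsspec : χ (t + 3) = 1 := Nat.find_spec hex
          have htle : t ≤ k - 4 := Nat.find_min' hex (by
            have e : k - 4 + 3 = k - 1 := by omega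
            rw [e]; exact hk1)
          set s := t + 3 with hs
          have hs3 : 3 ≤ s := by omega
          have hsle : s ≤ k - 1 := by omega
          have hmin : ∀ v, 1 ≤ v → v < s → χ v = 0 := by
            intro v hv1 hvs
            rcases Nat.lt_or_ge v 3 with hv3 | hv3
            · interval_cases v
              · exact hχ1
              · exact h2
            · have hne : ¬ χ (v - 3 + 3) = 1 := Nat.find_min hex (by omega)
              have e : v - 3 + 3 = v := by omega
              rw [e] at hne
              have : χ v ≤ 1 := hc v hv1 (by omega)
              omega
          have hzs : (r - 1) * s ≤ (r - 1) * (k - 1) := Nat.mul_le_mul_left _ hsle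
          have hzN : (r - 1) * s + (k - r) ≤ r * k - 2 * r + 1 := by
            zify [show 1 ≤ r by omega, show 1 ≤ k by omega, show r ≤ k by omega, h2r] at hzs ⊢
            linarith
          have hz1 : 1 ≤ (r - 1) * s + (k - r) := by omega
          have mzs : ((r - 1) * s + (k - r)) ∈ Finset.Icc 1 (r * k - 2 * r + 1) :=
            Finset.mem_Icc.mpr ⟨hz1, hzN⟩
          have ms : s ∈ Finset.Icc 1 (r * k - 2 * r + 1) := Finset.mem_Icc.mpr ⟨by omega, by omega⟩
          have hcz : χ ((r - 1) * s + (k - r)) = 0 ∨ χ ((r - 1) * s + (k - r)) = 1 := by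
            have := hc _ hz1 hzN; omega
          rcases hcz with hz0 | hz0
          · -- F2 : χ z* = 0, write z* as sum of small (color-0) values
            set q := (r - 1) * (s - 1) with hq
            set d := s - 2 with hd
            have hd1 : 1 ≤ d := by omega
            set a' := q / d with ha'
            set b' := q % d with hb'
            have hdm : d * a' + b' = q := Nat.div_add_mod q d
            have hblt : b' < d := Nat.mod_lt _ (by omega)
            have hqle : q ≤ 2 * (r - 1) * d := by
              have h1 : (r - 1) * (s - 1) ≤ (r - 1) * (2 * (s - 2)) :=
                Nat.mul_le_mul_left _ (by omega)
              calc q = (r - 1) * (s - 1) := hq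
                _ ≤ (r - 1) * (2 * (s - 2)) := h1
                _ = 2 * (r - 1) * d := by rw [hd]; ring
            have ha2 : a' ≤ 2 * (r - 1) := by
              have h1 : q / d ≤ 2 * (r - 1) * d / d := Nat.div_le_div_right hqle
              rwa [Nat.mul_div_cancel _ (by omega : 0 < d)] at h1
            have hak : a' ≤ k - 2 := by omega
            have msm1 : (s - 1) ∈ Finset.Icc 1 (r * k - 2 * r + 1) :=
              Finset.mem_Icc.mpr ⟨by omega, by omega⟩
            have mb : (1 + b') ∈ Finset.Icc 1 (r * k - 2 * r + 1) :=
              Finset.mem_Icc.mpr ⟨by omega, by omega⟩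
            apply build_s19 χ a' 1 (k - 2 - a') (s - 1) (1 + b') 1 ((r - 1) * s + (k - r))
              (by omega) msm1 mb m1 mzs
            · -- sum equation
              have e1 : a' * (s - 1) = a' * (s - 2) + a' := by
                have e : s - 1 = (s - 2) + 1 := by omega
                rw [e, Nat.mul_add, Nat.mul_one]
              have e2 : (r - 1) * s = (r - 1) * (s - 1) + (r - 1) := by
                conv_lhs => rw [show s = (s - 1) + 1 by omega]
                rw [Nat.mul_add, Nat.mul_one]
              have e3 : d * a' = a' * (s - 2) := by rw [hd, Nat.mul_comm]
              omega
            · -- count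
              rw [hmin (s - 1) (by omega) (by omega), hmin (1 + b') (by omega) (by omega),
                hχ1, hz0]
              simp
          · -- F1 : χ z* = 1 : (r-1) copies of s + (k-r) ones
            apply build_s19 χ (r - 1) (k - r) 0 s 1 1 ((r - 1) * s + (k - r)) (by omega)
              ms m1 m1 mzs (by omega)
            rw [hsspec, hχ1, hz0]
            have e : (r - 1) * 1 + (k - r) * 0 + 0 * 0 + 1 = r := by omega
            rw [e]
            exact Nat.mod_self r
        · -- χ 2 = 1
          have hint1 : k + r - 1 ≤ r * k - 2 * r + 1 := by
            zify [h2r, show 1 ≤ k + r by omega]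
            have hh1 : (1 : ℤ) ≤ (r : ℤ) - 1 := by
              have : (3 : ℤ) ≤ (r : ℤ) := by exact_mod_cast hr3
              linarith
            have hh2 : (1 : ℤ) ≤ (k : ℤ) - 3 := by
              have : (4 : ℤ) ≤ (k : ℤ) := by exact_mod_cast hk4
              linarith
            nlinarith [mul_le_mul hh1 hh2 (by norm_num) (by linarith)]
          have hc3 : χ 3 = 0 ∨ χ 3 = 1 := by have := hc 3 (by omega) (by omega); omega
          have m2 : (2 : ℕ) ∈ Finset.Icc 1 (r * k - 2 * r + 1) :=
            Finset.mem_Icc.mpr ⟨by omega, by omega⟩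
          have m3 : (3 : ℕ) ∈ Finset.Icc 1 (r * k - 2 * r + 1) :=
            Finset.mem_Icc.mpr ⟨by omega, by omega⟩
          rcases hc3 with h3 | h3
          · -- Case D : χ 3 = 0
            have huN : k + r - 2 ≤ r * k - 2 * r + 1 := by omega
            have mu : (k + r - 2) ∈ Finset.Icc 1 (r * k - 2 * r + 1) :=
              Finset.mem_Icc.mpr ⟨by omega, huN⟩
            have hcu : χ (k + r - 2) = 0 ∨ χ (k + r - 2) = 1 := by
              have := hc _ (show 1 ≤ k + r - 2 by omega) huN; omega
            rcases hcu with hu | hu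
            · -- D2 : χ u = 0
              have hZN : 2 * k + r - 4 ≤ r * k - 2 * r + 1 := by
                zify [h2r, show 4 ≤ 2 * k + r by omega]
                have hh1 : (1 : ℤ) ≤ (r : ℤ) - 2 := by
                  have : (3 : ℤ) ≤ (r : ℤ) := by exact_mod_cast hr3
                  linarith
                have hh2 : (1 : ℤ) ≤ (k : ℤ) - 3 := by
                  have : (4 : ℤ) ≤ (k : ℤ) := by exact_mod_cast hk4
                  linarith
                nlinarith [mul_le_mul hh1 hh2 (by norm_num) (by linarith)]
              have mZ : (2 * k + r - 4) ∈ Finset.Icc 1 (r * k - 2 * r + 1) :=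
                Finset.mem_Icc.mpr ⟨by omega, hZN⟩
              have hcZ : χ (2 * k + r - 4) = 0 ∨ χ (2 * k + r - 4) = 1 := by
                have := hc _ (show 1 ≤ 2 * k + r - 4 by omega) hZN; omega
              rcases hcZ with hZ | hZ
              · -- D2a : one u + (k-2) ones
                apply build_s19 χ 1 (k - 2) 0 (k + r - 2) 1 1 (2 * k + r - 4) (by omega)
                  mu m1 m1 mZ (by omega)
                rw [hu, hχ1, hZ]
                simp
              · -- D2b : (r-1) threes + (k-r-1) twos + 1 one
                apply build_s19 χ (r - 1) (k - r - 1) 1 3 2 1 (2 * k + r - 4) (by omega)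
                  m3 m2 m1 mZ (by omega)
                rw [h3, h2, hχ1, hZ]
                have e : (r - 1) * 0 + (k - r - 1) * 1 + 1 * 0 + 1 = k - r := by omega
                rw [e]
                exact hmod _ (Nat.dvd_sub hdvd dvd_rfl)
            · -- D1 : (r-1) twos + (k-r) ones
              apply build_s19 χ (r - 1) (k - r) 0 2 1 1 (k + r - 2) (by omega)
                m2 m1 m1 mu (by omega)
              rw [h2, hχ1, hu]
              have e : (r - 1) * 1 + (k - r) * 0 + 0 * 0 + 1 = r := by omega
              rw [e]
              exact Nat.mod_self r
          · -- Case C : χ 3 = 1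
            have mw : (k + r - 1) ∈ Finset.Icc 1 (r * k - 2 * r + 1) :=
              Finset.mem_Icc.mpr ⟨by omega, hint1⟩
            have hcw : χ (k + r - 1) = 0 ∨ χ (k + r - 1) = 1 := by
              have := hc _ (show 1 ≤ k + r - 1 by omega) hint1; omega
            rcases hcw with hw | hw
            · -- C1 : r twos + (k-1-r) ones
              apply build_s19 χ r (k - 1 - r) 0 2 1 1 (k + r - 1) (by omega)
                m2 m1 m1 mw (by omega)
              rw [h2, hχ1, hw]
              have e : r * 1 + (k - 1 - r) * 0 + 0 * 0 + 0 = r := by omega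
              rw [e]
              exact Nat.mod_self r
            · -- C2 : (r-2) twos + 1 three + (k-r) ones
              apply build_s19 χ (r - 2) 1 (k - r) 2 3 1 (k + r - 1) (by omega)
                m2 m3 m1 mw (by omega)
              rw [h2, h3, hχ1, hw]
              have e : (r - 2) * 1 + 1 * 1 + (k - r) * 0 + 1 = r := by omega
              rw [e]
              exact Nat.mod_self r
    · -- Case B : χ N = 1 : (r-1) copies of (k-1) + (k-r) ones
      apply build_s19 χ (r - 1) (k - r) 0 (k - 1) 1 1 (r * k - 2 * r + 1) (by omega)
        mk1 m1 m1 mN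
      · zify [show 1 ≤ r by omega, show 1 ≤ k by omega, show r ≤ k by omega, h2r]
        ring
      · rw [hk1, hχ1, hN]
        have e : (r - 1) * 1 + (k - r) * 0 + 0 * 0 + 1 = r := by omega
        rw [e]
        exact Nat.mod_self r

theorem stmt19 (k r : ℕ) (hr : 0 < r) (hdvd : r ∣ k) (hkr : 2 * r ≤ k)
    (χ : ℕ → ℕ) (hχ : ∀ n ∈ Finset.Icc 1 (r * k - 2 * r + 1), χ n ≤ 1) :
    ∃ (y : Fin (k - 1) → ℕ) (z : ℕ),
      (∀ i, y i ∈ Finset.Icc 1 (r * k - 2 * r + 1)) ∧ z ∈ Finset.Icc 1 (r * k - 2 * r + 1) ∧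
      (∑ i, y i) = z ∧ ((∑ i, χ (y i)) + χ z) % r = 0 := by
  have hkk : k ≤ r * k := Nat.le_mul_of_pos_left k hr
  have h2r : 2 * r ≤ r * k := le_trans hkr hkk
  have h1N : 1 ≤ r * k - 2 * r + 1 := by omega
  have m1 : (1 : ℕ) ∈ Finset.Icc 1 (r * k - 2 * r + 1) := Finset.mem_Icc.mpr ⟨le_refl 1, h1N⟩
  rcases Nat.lt_or_ge r 2 with hr2 | hr2
  · -- r = 1
    have hr1 : r = 1 := by omega
    subst hr1
    have mk1 : (k - 1 : ℕ) ∈ Finset.Icc 1 (1 * k - 2 * 1 + 1) :=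
      Finset.mem_Icc.mpr ⟨by omega, by omega⟩
    apply build_s19 χ (k - 1) 0 0 1 1 1 (k - 1) (by omega) m1 m1 m1 mk1 (by omega)
    exact Nat.mod_one _
  · -- r ≥ 2
    have hχ1le : χ 1 ≤ 1 := hχ 1 m1
    rcases Nat.lt_or_ge (χ 1) 1 with h1 | h1
    · exact key k r hr2 hdvd hkr χ hχ (by omega)
    · -- χ 1 = 1 : flip colors
      have hχ1 : χ 1 = 1 := by omega
      obtain ⟨y, z, hy, hz, hsum, hcnt⟩ :=
        key k r hr2 hdvd hkr (fun n => 1 - χ n)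
          (fun n _ => Nat.sub_le 1 (χ n)) (by simp [hχ1])
      refine ⟨y, z, hy, hz, hsum, ?_⟩
      have hy1 : ∀ i, χ (y i) ≤ 1 := fun i => hχ _ (hy i)
      have hz1 : χ z ≤ 1 := hχ _ hz
      have hsum1 : (∑ i, (1 - χ (y i))) + (∑ i, χ (y i)) = k - 1 := by
        rw [← Finset.sum_add_distrib]
        have h : ∀ i ∈ (Finset.univ : Finset (Fin (k - 1))),
            (1 - χ (y i)) + χ (y i) = 1 := by
          intro i _
          have := hy1 i
          omega
        rw [Finset.sum_congr rfl h, Finset.sum_const, Finset.card_univ, Fintype.card_fin,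
          smul_eq_mul, mul_one]
      have hdz : r ∣ ((∑ i, (1 - χ (y i))) + (1 - χ z)) := Nat.dvd_of_mod_eq_zero hcnt
      have hS : (∑ i, χ (y i)) + χ z = k - ((∑ i, (1 - χ (y i))) + (1 - χ z)) := by
        omega
      have hdvdS : r ∣ ((∑ i, χ (y i)) + χ z) := by
        rw [hS]
        exact Nat.dvd_sub hdvd hdz
      rcases hdvdS with ⟨d, hd⟩
      rw [hd]
      exact Nat.mul_mod_right r d
end
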